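/- arXiv:1912.07931 — 10 statements merged into one kernel-verified Lean document; each statement's English description precedes it below -/
import Mathlib

section
/- Let (a_k)_{k≥0} be a nondecreasing sequence of nonnegative real numbers and let B > 0 be such that Σ_{k=0}^{∞} a_k² r^{2k} ≤ B/(1−r)² for all real r with 0 ≤ r < 1. Then a_n = O(√n); that is, there exists a constant B' > 0 such that a_n ≤ B'·√n for all n ≥ 1. -/
/-!
Compare the series with the block `n ≤ k < 2n` at radius `r = 1 - 1/(8n)`. On that block
`a k ≥ a n` by monotonicity and `r ^ (2k) ≥ r ^ (4n) ≥ 1/2` by Bernoulli's inequality, so the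
block contributes at least `n a_n² / 2`, while the bound gives at most `B/(1-r)² = 64 B n²`.
Hence `a_n² ≤ 128 B n`.
-/

lemma natCast_mul_sq_mul_pow_le_tsum {a : ℕ → ℝ} (ha_mono : Monotone a) {n : ℕ}
    (han : 0 ≤ a n) {r : ℝ} (hr0 : 0 ≤ r) (hr1 : r ≤ 1)
    (hs : Summable fun k : ℕ => a k ^ 2 * r ^ (2 * k)) :
    n * (a n ^ 2 * r ^ (4 * n)) ≤ ∑' k : ℕ, a k ^ 2 * r ^ (2 * k) := by
  have hcard : (Finset.Ico n (2 * n)).card = n := by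
    rw [Nat.card_Ico]; omega
  calc (n : ℝ) * (a n ^ 2 * r ^ (4 * n))
      = ∑ _k ∈ Finset.Ico n (2 * n), a n ^ 2 * r ^ (4 * n) := by
        rw [Finset.sum_const, hcard, nsmul_eq_mul]
    _ ≤ ∑ k ∈ Finset.Ico n (2 * n), a k ^ 2 * r ^ (2 * k) := by
        refine Finset.sum_le_sum fun k hk => ?_
        obtain ⟨hnk, hk2n⟩ := Finset.mem_Ico.mp hk
        have ha : a n ^ 2 ≤ a k ^ 2 := pow_le_pow_left₀ han (ha_mono hnk) 2
        have hr : r ^ (4 * n) ≤ r ^ (2 * k) := pow_le_pow_of_le_one hr0 hr1 (by omega)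
        exact mul_le_mul ha hr (by positivity) (by positivity)
    _ ≤ ∑' k : ℕ, a k ^ 2 * r ^ (2 * k) :=
        hs.sum_le_tsum _ fun k _ => by positivity

lemma one_half_le_one_sub_pow {n : ℕ} (hn : n ≠ 0) :
    (1 / 2 : ℝ) ≤ (1 - 1 / (8 * n)) ^ (4 * n) := by
  have hn' : (1 : ℝ) ≤ n := by exact_mod_cast Nat.one_le_iff_ne_zero.mpr hn
  have hle : 1 / (8 * (n : ℝ)) ≤ 1 := by rw [div_le_one (by positivity)]; linarith
  calc (1 / 2 : ℝ) = 1 + (4 * n : ℕ) * -(1 / (8 * n)) := by push_cast; field_simp; ring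
    _ ≤ (1 + -(1 / (8 * n))) ^ (4 * n) := one_add_mul_le_pow (by linarith) _
    _ = (1 - 1 / (8 * n)) ^ (4 * n) := by ring

lemma sq_le_of_tsum_sq_mul_pow_le {a : ℕ → ℝ} (ha_mono : Monotone a) (ha_nonneg : ∀ k, 0 ≤ a k)
    {B : ℝ}
    (hsum : ∀ r : ℝ, 0 ≤ r → r < 1 →
      Summable (fun k : ℕ => a k ^ 2 * r ^ (2 * k)) ∧
      (∑' k : ℕ, a k ^ 2 * r ^ (2 * k)) ≤ B / (1 - r) ^ 2)
    {n : ℕ} (hn : n ≠ 0) :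
    a n ^ 2 ≤ 128 * B * n := by
  have hnpos : (0 : ℝ) < n := by positivity
  set r : ℝ := 1 - 1 / (8 * n) with hr
  have hδ : 0 < 1 / (8 * (n : ℝ)) := by positivity
  have hr0 : 0 ≤ r := by
    have : 1 / (8 * (n : ℝ)) ≤ 1 := by
      rw [div_le_one (by positivity)]
      linarith [show (1 : ℝ) ≤ n by exact_mod_cast Nat.one_le_iff_ne_zero.mpr hn]
    linarith
  obtain ⟨hs, hbound⟩ := hsum r hr0 (by linarith)
  have hblock := natCast_mul_sq_mul_pow_le_tsum ha_mono (ha_nonneg n) hr0 (by linarith) hs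
  have hradius : B / (1 - r) ^ 2 = 64 * B * n ^ 2 := by
    rw [hr]; field_simp; ring
  have hhalf : n * (a n ^ 2 * (1 / 2)) ≤ n * (a n ^ 2 * r ^ (4 * n)) := by
    gcongr
    exact one_half_le_one_sub_pow hn
  nlinarith

/-- If `(a k)` is a nondecreasing sequence of nonnegative reals such that
`∑ k, a k ^ 2 * r ^ (2 k) ≤ B / (1 - r) ^ 2` (a convergent series) for all `0 ≤ r < 1`,
then `a n = O (√ n)`. -/
theorem stmt_0 (a : ℕ → ℝ) (ha_mono : Monotone a) (ha_nonneg : ∀ k, 0 ≤ a k)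
    (B : ℝ) (hB : 0 < B)
    (hsum : ∀ r : ℝ, 0 ≤ r → r < 1 →
      Summable (fun k : ℕ => a k ^ 2 * r ^ (2 * k)) ∧
      (∑' k : ℕ, a k ^ 2 * r ^ (2 * k)) ≤ B / (1 - r) ^ 2) :
    ∃ B' > 0, ∀ n : ℕ, 1 ≤ n → a n ≤ B' * Real.sqrt n := by
  refine ⟨Real.sqrt (128 * B), by positivity, fun n hn => ?_⟩
  calc a n = Real.sqrt (a n ^ 2) := (Real.sqrt_sq (ha_nonneg n)).symm
    _ ≤ Real.sqrt (128 * B * n) :=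
        Real.sqrt_le_sqrt (sq_le_of_tsum_sq_mul_pow_le ha_mono ha_nonneg hsum (by omega))
    _ = Real.sqrt (128 * B) * Real.sqrt n := Real.sqrt_mul (by positivity) _
end

section
/- If T is a Kreiss bounded operator on a complex Hilbert space H with Kreiss constant C > 0, then for every unit vector y ∈ H and every real r with 0 ≤ r < 1 one has Σ_{n=0}^{∞} r^{2n} ‖T^n y‖² ≤ C²/(1−r)². -/
/-!
Put `a n = rⁿ • Tⁿ y`. The Kreiss condition bounds the spectral radius of `T` by `1`, so for
`‖ω‖ = 1` the Neumann series `∑ ωⁿ • a n` converges to `(1 - rω • T)⁻¹ y`, a rescaled resolvent of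
`T` at `(rω)⁻¹`; the Kreiss bound then gives `‖∑ ωⁿ • a n‖ ≤ C ‖y‖ / (1 - r)` on the whole unit
circle. Averaging the square over the circle (Parseval for `θ ↦ ∑ e^{inθ} • a n`) yields
`∑ ‖a n‖² ≤ (C ‖y‖ / (1 - r))²`. For `r = 0` the sum is `‖y‖² = 1`, and `1 ≤ C²` follows from the
first term of the bound as `r → 0`.
-/

open Filter Topology Finset Complex ComplexConjugate
open scoped Real NNReal ENNReal

theorem Ring.inverse_one_sub_smul {𝕜 R : Type*} [Field 𝕜] [Ring R] [Algebra 𝕜 R] {a : R} {c : 𝕜}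
    (hc : c ≠ 0) (hu : IsUnit (c⁻¹ • (1 : R) - a)) :
    Ring.inverse (1 - c • a) = c⁻¹ • Ring.inverse (c⁻¹ • (1 : R) - a) := by
  have hfactor : 1 - c • a = c • (c⁻¹ • (1 : R) - a) := by
    rw [smul_sub, smul_smul, mul_inv_cancel₀ hc, one_smul]
  have hunit : IsUnit (1 - c • a) := by
    rw [hfactor]; exact hu.smul (Units.mk0 c hc)
  rw [← mul_one (Ring.inverse (1 - c • a)), Ring.inverse_mul_eq_iff_eq_mul _ _ _ hunit, hfactor,
    smul_mul_smul_comm, mul_inv_cancel₀ hc, one_smul, Ring.mul_inverse_cancel _ hu]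

section NeumannSeries

variable {A : Type*} [NormedRing A] [NormedAlgebra ℂ A] [CompleteSpace A]

theorem spectrum.hasFPowerSeriesOnBall_inverse_one_sub_smul_of_lt_inv {a : A} {r : ℝ≥0}
    (hr0 : 0 < r) (hr : (r : ℝ≥0∞) < (spectralRadius ℂ a)⁻¹) :
    HasFPowerSeriesOnBall (fun z : ℂ => Ring.inverse (1 - z • a))
      (fun n => ContinuousMultilinearMap.mkPiRing ℂ (Fin n) (a ^ n)) 0 r :=
  (spectrum.hasFPowerSeriesOnBall_inverse_one_sub_smul ℂ a).exchange_radius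
    ((spectrum.differentiableOn_inverse_one_sub_smul hr).hasFPowerSeriesOnBall hr0)

theorem spectrum.hasSum_pow_smul_pow {a : A} {z : ℂ}
    (hz : (‖z‖₊ : ℝ≥0∞) < (spectralRadius ℂ a)⁻¹) :
    HasSum (fun n => z ^ n • a ^ n) (Ring.inverse (1 - z • a)) := by
  obtain ⟨r, hzr, hr⟩ := ENNReal.lt_iff_exists_nnreal_btwn.mp hz
  have hp := hasFPowerSeriesOnBall_inverse_one_sub_smul_of_lt_inv
    ((zero_le).trans_lt (ENNReal.coe_lt_coe.mp hzr)) hr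
  simpa [ContinuousMultilinearMap.mkPiRing_apply] using
    hp.hasSum (y := z) (by simpa [← coe_nnnorm] using hzr)

theorem spectrum.summable_norm_pow_smul_pow {a : A} {z : ℂ}
    (hz : (‖z‖₊ : ℝ≥0∞) < (spectralRadius ℂ a)⁻¹) :
    Summable fun n => ‖z ^ n • a ^ n‖ := by
  obtain ⟨r, hzr, hr⟩ := ENNReal.lt_iff_exists_nnreal_btwn.mp hz
  have hp := hasFPowerSeriesOnBall_inverse_one_sub_smul_of_lt_inv
    ((zero_le).trans_lt (ENNReal.coe_lt_coe.mp hzr)) hr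
  refine (FormalMultilinearSeries.summable_norm_mul_pow _ (hzr.trans_le hp.r_le)).congr fun n => ?_
  simp [ContinuousMultilinearMap.norm_mkPiRing, norm_smul, mul_comm]

end NeumannSeries

def KreissBoundedWith {A : Type*} [NormedRing A] [NormedAlgebra ℂ A] (C : ℝ) (a : A) : Prop :=
  ∀ z : ℂ, 1 < ‖z‖ → IsUnit (z • (1 : A) - a) ∧ ‖Ring.inverse (z • (1 : A) - a)‖ ≤ C / (‖z‖ - 1)

namespace KreissBoundedWith

variable {A : Type*} [NormedRing A] [NormedAlgebra ℂ A] {C : ℝ} {a : A}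

theorem spectralRadius_le_one (h : KreissBoundedWith C a) : spectralRadius ℂ a ≤ 1 := by
  refine iSup₂_le fun k hk => ?_
  by_contra! hlt
  have hk1 : 1 < ‖k‖ := by exact_mod_cast hlt
  exact spectrum.mem_iff.mp hk (by simpa [Algebra.algebraMap_eq_smul_one] using (h k hk1).1)

theorem coe_nnnorm_lt_inv_spectralRadius (h : KreissBoundedWith C a) {c : ℂ} (hc : ‖c‖ < 1) :
    (‖c‖₊ : ℝ≥0∞) < (spectralRadius ℂ a)⁻¹ :=
  calc (‖c‖₊ : ℝ≥0∞) < 1 := by exact_mod_cast hc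
    _ ≤ (spectralRadius ℂ a)⁻¹ := ENNReal.one_le_inv.mpr h.spectralRadius_le_one

theorem norm_inverse_one_sub_smul_le (h : KreissBoundedWith C a) {c : ℂ} (hc0 : c ≠ 0)
    (hc1 : ‖c‖ < 1) : ‖Ring.inverse (1 - c • a)‖ ≤ C / (1 - ‖c‖) := by
  have hinv : 1 < ‖c⁻¹‖ := by
    rw [norm_inv]; exact one_lt_inv₀ (norm_pos_iff.mpr hc0) |>.mpr hc1
  obtain ⟨hu, hbound⟩ := h c⁻¹ hinv
  rw [Ring.inverse_one_sub_smul hc0 hu, norm_smul]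
  calc ‖c⁻¹‖ * ‖Ring.inverse (c⁻¹ • (1 : A) - a)‖ ≤ ‖c⁻¹‖ * (C / (‖c⁻¹‖ - 1)) := by gcongr
    _ = C / (1 - ‖c‖) := by
      rw [norm_inv]
      have : 0 < ‖c‖ := norm_pos_iff.mpr hc0
      field_simp

end KreissBoundedWith

section Parseval

variable {E : Type*} [NormedAddCommGroup E] [InnerProductSpace ℂ E]

theorem integral_conj_exp_pow_mul_exp_pow (n m : ℕ) :
    ∫ θ in (0 : ℝ)..2 * π, conj (exp (θ * I) ^ n) * exp (θ * I) ^ m =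
      if n = m then (2 * π : ℂ) else 0 := by
  have hexp (θ : ℝ) : conj (exp (θ * I) ^ n) * exp (θ * I) ^ m = exp (((m : ℂ) - n) * I * θ) := by
    rw [map_pow, ← exp_conj, map_mul, conj_ofReal, conj_I, ← exp_nat_mul, ← exp_nat_mul,
      ← exp_add]
    ring_nf
  simp_rw [hexp]
  split_ifs with hnm
  · simp [hnm]
  · have hc : ((m : ℂ) - n) * I ≠ 0 :=
      mul_ne_zero (sub_ne_zero.mpr (by exact_mod_cast Ne.symm hnm)) I_ne_zero
    have hperiod : exp (((m : ℂ) - n) * I * (2 * π : ℝ)) = 1 := by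
      convert exp_int_mul_two_pi_mul_I ((m : ℤ) - n) using 2
      push_cast; ring
    rw [integral_exp_mul_complex hc, hperiod]
    simp

theorem integral_norm_sum_exp_pow_smul_sq (a : ℕ → E) (N : ℕ) :
    ∫ θ in (0 : ℝ)..2 * π, ‖∑ n ∈ range N, exp (θ * I) ^ n • a n‖ ^ 2 =
      2 * π * ∑ n ∈ range N, ‖a n‖ ^ 2 := by
  have hnorm_sq (x : E) : ((‖x‖ ^ 2 : ℝ) : ℂ) = inner ℂ x x := by
    simp [inner_self_eq_norm_sq_to_K]
  have hexpand (θ : ℝ) : ((‖∑ n ∈ range N, exp (θ * I) ^ n • a n‖ ^ 2 : ℝ) : ℂ) =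
      ∑ n ∈ range N, ∑ m ∈ range N,
        conj (exp (θ * I) ^ n) * exp (θ * I) ^ m * inner ℂ (a n) (a m) := by
    simp_rw [hnorm_sq, sum_inner, inner_sum, inner_smul_left, inner_smul_right, mul_assoc]
  have hint (n m : ℕ) : IntervalIntegrable
      (fun θ : ℝ => conj (exp (θ * I) ^ n) * exp (θ * I) ^ m * inner ℂ (a n) (a m))
      MeasureTheory.volume 0 (2 * π) :=
    (by fun_prop : Continuous _).intervalIntegrable _ _
  apply ofReal_injective
  rw [← intervalIntegral.integral_ofReal, intervalIntegral.integral_congr fun θ _ => hexpand θ,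
    intervalIntegral.integral_finsetSum fun n _ =>
      (continuous_finsetSum _ fun m _ => by fun_prop).intervalIntegrable _ _]
  simp_rw [intervalIntegral.integral_finsetSum fun m _ => hint _ m,
    intervalIntegral.integral_mul_const, integral_conj_exp_pow_mul_exp_pow, ite_mul, zero_mul,
    sum_ite_eq]
  rw [sum_ite_of_true fun n hn => hn]
  simp only [ofReal_mul, ofReal_ofNat, ofReal_sum, hnorm_sq, mul_sum]

theorem sum_norm_sq_le_of_norm_sum_exp_pow_smul_le (a : ℕ → E) (N : ℕ) {K : ℝ}
    (h : ∀ θ : ℝ, ‖∑ n ∈ range N, exp (θ * I) ^ n • a n‖ ≤ K) :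
    ∑ n ∈ range N, ‖a n‖ ^ 2 ≤ K ^ 2 := by
  have h2π : 0 < 2 * π := by positivity
  refine le_of_mul_le_mul_left ?_ h2π
  calc 2 * π * ∑ n ∈ range N, ‖a n‖ ^ 2
      = ∫ θ in (0 : ℝ)..2 * π, ‖∑ n ∈ range N, exp (θ * I) ^ n • a n‖ ^ 2 :=
        (integral_norm_sum_exp_pow_smul_sq a N).symm
    _ ≤ ∫ _ in (0 : ℝ)..2 * π, K ^ 2 :=
        intervalIntegral.integral_mono_on h2π.le
          ((by fun_prop : Continuous _).intervalIntegrable _ _) intervalIntegrable_const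
          fun θ _ => pow_le_pow_left₀ (norm_nonneg _) (h θ) 2
    _ = 2 * π * K ^ 2 := by simp

theorem summable_norm_sq_and_tsum_le_of_norm_tsum_pow_smul_le [CompleteSpace E] {a : ℕ → E}
    (ha : Summable fun n => ‖a n‖) {K : ℝ}
    (hK : ∀ ω : ℂ, ‖ω‖ = 1 → ‖∑' n, ω ^ n • a n‖ ≤ K) :
    Summable (fun n => ‖a n‖ ^ 2) ∧ ∑' n, ‖a n‖ ^ 2 ≤ K ^ 2 := by
  set t : ℕ → ℝ := fun N => ∑' n, ‖a (n + N)‖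
  have ht_nonneg (N : ℕ) : 0 ≤ t N := tsum_nonneg fun _ => norm_nonneg _
  have hK_nonneg : 0 ≤ K := (norm_nonneg _).trans (hK 1 norm_one)
  -- Truncating the series at `N` costs at most the tail `t N` on the whole unit circle.
  have hpartial (N : ℕ) : ∑ n ∈ range N, ‖a n‖ ^ 2 ≤ (K + t N) ^ 2 := by
    refine sum_norm_sq_le_of_norm_sum_exp_pow_smul_le a N fun θ => ?_
    have hω : ‖exp (θ * I)‖ = 1 := norm_exp_ofReal_mul_I θ
    have hnorm (n : ℕ) : ‖exp (θ * I) ^ n • a n‖ = ‖a n‖ := by simp [norm_smul, hω]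
    have hs : Summable fun n => exp (θ * I) ^ n • a n :=
      Summable.of_norm (by simpa only [hnorm] using ha)
    have htail : ‖∑' n, exp (θ * I) ^ (n + N) • a (n + N)‖ ≤ t N := by
      refine (norm_tsum_le_tsum_norm ?_).trans_eq (by simp only [hnorm, t])
      simpa only [hnorm] using (summable_nat_add_iff N).mpr ha
    calc ‖∑ n ∈ range N, exp (θ * I) ^ n • a n‖
        = ‖(∑' n, exp (θ * I) ^ n • a n) - ∑' n, exp (θ * I) ^ (n + N) • a (n + N)‖ := by
          rw [← hs.sum_add_tsum_nat_add N, add_sub_cancel_right]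
      _ ≤ K + t N := (norm_sub_le _ _).trans (add_le_add (hK _ hω) htail)
  have ht_le (N : ℕ) : t N ≤ ∑' n, ‖a n‖ := by
    rw [← ha.sum_add_tsum_nat_add N]
    exact le_add_of_nonneg_left (sum_nonneg fun _ _ => norm_nonneg _)
  have hsum : Summable fun n => ‖a n‖ ^ 2 :=
    summable_of_sum_range_le (c := (K + ∑' n, ‖a n‖) ^ 2) (fun _ => by positivity) fun N =>
      (hpartial N).trans (pow_le_pow_left₀ (by linarith [ht_nonneg N]) (by linarith [ht_le N]) 2)
  refine ⟨hsum, le_of_tendsto_of_tendsto' hsum.hasSum.tendsto_sum_nat ?_ hpartial⟩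
  simpa using (tendsto_const_nhds.add (tendsto_sum_nat_add fun n => ‖a n‖)).pow 2

end Parseval

namespace KreissBoundedWith

variable {E : Type*} [NormedAddCommGroup E] [InnerProductSpace ℂ E] [CompleteSpace E]
  {C : ℝ} {T : E →L[ℂ] E}

theorem summable_and_tsum_pow_mul_norm_pow_apply_sq_le (hT : KreissBoundedWith C T) (y : E)
    {r : ℝ} (hr0 : 0 < r) (hr1 : r < 1) :
    Summable (fun n : ℕ => r ^ (2 * n) * ‖(T ^ n) y‖ ^ 2) ∧
      ∑' n : ℕ, r ^ (2 * n) * ‖(T ^ n) y‖ ^ 2 ≤ (C * ‖y‖ / (1 - r)) ^ 2 := by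
  set a : ℕ → E := fun n => ((r : ℂ) ^ n • T ^ n) y
  have hr : ‖(r : ℂ)‖ = r := by simp [hr0.le]
  have ha : Summable fun n => ‖a n‖ := by
    have hT_pow := spectrum.summable_norm_pow_smul_pow
      (hT.coe_nnnorm_lt_inv_spectralRadius (show ‖(r : ℂ)‖ < 1 by rwa [hr]))
    exact (hT_pow.mul_right ‖y‖).of_nonneg_of_le (fun _ => norm_nonneg _) fun n =>
      ((r : ℂ) ^ n • T ^ n).le_opNorm y
  have hK (ω : ℂ) (hω : ‖ω‖ = 1) : ‖∑' n, ω ^ n • a n‖ ≤ C * ‖y‖ / (1 - r) := by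
    have hc : ‖(r : ℂ) * ω‖ = r := by rw [norm_mul, hr, hω, mul_one]
    have hsum : HasSum (fun n => ω ^ n • a n) (Ring.inverse (1 - ((r : ℂ) * ω) • T) y) := by
      have := (spectrum.hasSum_pow_smul_pow (hT.coe_nnnorm_lt_inv_spectralRadius
        (by rwa [hc]))).mapL (ContinuousLinearMap.apply ℂ E y)
      simpa [a, mul_pow, smul_smul, mul_comm] using this
    have hc0 : (r : ℂ) * ω ≠ 0 := by
      rw [← norm_pos_iff, hc]; exact hr0
    rw [hsum.tsum_eq]
    calc _ ≤ ‖Ring.inverse (1 - ((r : ℂ) * ω) • T)‖ * ‖y‖ := ContinuousLinearMap.le_opNorm _ _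
      _ ≤ C / (1 - r) * ‖y‖ := by
          gcongr; simpa only [hc] using hT.norm_inverse_one_sub_smul_le hc0 (by rwa [hc])
      _ = C * ‖y‖ / (1 - r) := by ring
  have hsq (n : ℕ) : ‖a n‖ ^ 2 = r ^ (2 * n) * ‖(T ^ n) y‖ ^ 2 := by
    simp only [a, smul_apply, norm_smul, norm_pow, hr, mul_pow, pow_mul, pow_right_comm]
  simpa only [hsq] using summable_norm_sq_and_tsum_le_of_norm_tsum_pow_smul_le ha hK

theorem one_le_sq (hT : KreissBoundedWith C T) {y : E} (hy : y ≠ 0) : 1 ≤ C ^ 2 := by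
  have hbound : ∀ r ∈ Set.Ioo (0 : ℝ) 1, (1 - r) ^ 2 ≤ C ^ 2 := by
    rintro r ⟨hr0, hr1⟩
    obtain ⟨hs, hle⟩ := hT.summable_and_tsum_pow_mul_norm_pow_apply_sq_le y hr0 hr1
    have hfirst : ‖y‖ ^ 2 ≤ (C * ‖y‖ / (1 - r)) ^ 2 := by
      simpa using (hs.le_tsum 0 fun n _ => by positivity).trans hle
    have hy0 : 0 < ‖y‖ ^ 2 := by positivity
    have hr : 0 < (1 - r) ^ 2 := pow_pos (sub_pos.mpr hr1) 2
    rw [div_pow, mul_pow, le_div_iff₀ hr] at hfirst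
    nlinarith
  have hlim : Tendsto (fun r : ℝ => (1 - r) ^ 2) (𝓝[>] 0) (𝓝 1) := by
    have hcont : Continuous fun r : ℝ => (1 - r) ^ 2 := by fun_prop
    simpa using (hcont.tendsto 0).mono_left nhdsWithin_le_nhds
  exact le_of_tendsto hlim (eventually_of_mem (Ioo_mem_nhdsGT one_pos) hbound)

end KreissBoundedWith

theorem stmt_2_general {H : Type*} [NormedAddCommGroup H] [InnerProductSpace ℂ H] [CompleteSpace H]
    (T : H →L[ℂ] H) (C : ℝ)
    (hKreiss : ∀ z : ℂ, 1 < ‖z‖ →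
      IsUnit (z • (1 : H →L[ℂ] H) - T) ∧
      ‖Ring.inverse (z • (1 : H →L[ℂ] H) - T)‖ ≤ C / (‖z‖ - 1)) :
    ∀ y : H, ‖y‖ = 1 → ∀ r : ℝ, 0 ≤ r → r < 1 →
      Summable (fun n : ℕ => r ^ (2 * n) * ‖(T ^ n) y‖ ^ 2) ∧
      (∑' n : ℕ, r ^ (2 * n) * ‖(T ^ n) y‖ ^ 2) ≤ C ^ 2 / (1 - r) ^ 2 := by
  intro y hy r hr0 hr1
  have hT : KreissBoundedWith C T := hKreiss
  rcases hr0.eq_or_lt with rfl | hr0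
  · have hsum : HasSum (fun n : ℕ => (0 : ℝ) ^ (2 * n) * ‖(T ^ n) y‖ ^ 2) 1 := by
      convert hasSum_single (f := fun n : ℕ => (0 : ℝ) ^ (2 * n) * ‖(T ^ n) y‖ ^ 2) 0
        fun n hn => by simp [hn]
      simp [hy]
    refine ⟨hsum.summable, ?_⟩
    rw [hsum.tsum_eq]
    simpa using hT.one_le_sq (y := y) (by rintro rfl; simp at hy)
  · simpa [hy, div_pow] using hT.summable_and_tsum_pow_mul_norm_pow_apply_sq_le y hr0 hr1

/-- If `T` is Kreiss bounded on a complex Hilbert space with Kreiss constant `C`, then for every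
unit vector `y` and every `0 ≤ r < 1`, `∑ n, r^(2n) ‖T^n y‖² ≤ C² / (1-r)²`
(the series being convergent). -/
theorem stmt_2 {H : Type*} [NormedAddCommGroup H] [InnerProductSpace ℂ H] [CompleteSpace H]
    (T : H →L[ℂ] H) (C : ℝ) (hC : 0 < C)
    (hKreiss : ∀ z : ℂ, 1 < ‖z‖ →
      IsUnit (z • (1 : H →L[ℂ] H) - T) ∧
      ‖Ring.inverse (z • (1 : H →L[ℂ] H) - T)‖ ≤ C / (‖z‖ - 1)) :
    ∀ y : H, ‖y‖ = 1 → ∀ r : ℝ, 0 ≤ r → r < 1 →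
      Summable (fun n : ℕ => r ^ (2 * n) * ‖(T ^ n) y‖ ^ 2) ∧
      (∑' n : ℕ, r ^ (2 * n) * ‖(T ^ n) y‖ ^ 2) ≤ C ^ 2 / (1 - r) ^ 2 :=
  stmt_2_general T C hKreiss
end

section
/- Let 0 < η < 1/2. Then there exists a constant c₁ > 0 such that (1/(n+1)) Σ_{j=1}^{∞} Σ_{j'=j}^{j+n} γ_j δ_{j'} (j'/j)^η ≤ c₁ for all n ∈ ℕ and all sequences of nonnegative reals (γ_j)_{j≥1}, (δ_{j'})_{j'≥1} with Σ_{j=1}^{∞} γ_j² = Σ_{j'=1}^{∞} δ_{j'}² = 1. -/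
/-!
Bound `γ_j δ_{j'} (j'/j)^η ≤ (γ_j² + δ_{j'}² (j'/j)^{2η}) / 2`. Each row has `n + 1` terms, so the
`γ` part contributes at most `(n + 1)/2`. For the `δ` part, swap the sums: with `s = 2η < 1`, the
column `∑_{a < j ≤ m} (m/j)^s` is at most `(m - a)/(1 - s) ≤ (n + 1)/(1 - s)`, by comparing `j^{-s}`
with the telescoping increments of `t^{1-s}` and using `m^s a^{1-s} ≥ a`. The resulting bound on
all partial sums gives both summability and `c₁ = (1 + 1/(1 - 2η))/2`.
-/

open Finset

section

variable {s : ℝ}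

lemma one_sub_mul_rpow_neg_le_sub_rpow (hs0 : 0 ≤ s) (hs1 : s ≤ 1) {x : ℝ} (hx : 0 ≤ x) :
    (1 - s) * (x + 1) ^ (-s) ≤ (x + 1) ^ (1 - s) - x ^ (1 - s) := by
  have hx1 : 0 < x + 1 := by linarith
  -- weighted AM-GM: `x ^ (1 - s) * (x + 1) ^ s ≤ x + s`
  have amgm := Real.geom_mean_le_arith_mean2_weighted (by linarith) hs0 hx hx1.le
    (sub_add_cancel 1 s)
  have h1 : (x + 1) ^ (1 - s) = (x + 1) * (x + 1) ^ (-s) := by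
    rw [sub_eq_add_neg, Real.rpow_add hx1, Real.rpow_one]
  have h2 : x ^ (1 - s) = x ^ (1 - s) * (x + 1) ^ s * (x + 1) ^ (-s) := by
    rw [mul_assoc, ← Real.rpow_add hx1, add_neg_cancel, Real.rpow_zero, mul_one]
  rw [h1, h2, ← sub_mul]
  exact mul_le_mul_of_nonneg_right (by linarith) (Real.rpow_nonneg hx1.le _)

lemma sum_Ico_div_rpow_le (hs0 : 0 ≤ s) (hs1 : s < 1) {a m : ℕ} (ham : a ≤ m) :
    ∑ j ∈ Ico a m, ((m : ℝ) / (j + 1)) ^ s ≤ (m - a) / (1 - s) := by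
  have h1s : 0 < 1 - s := by linarith
  have hm : (0 : ℝ) ≤ m := m.cast_nonneg
  have hexp : s + (1 - s) ≠ 0 := by simp
  calc ∑ j ∈ Ico a m, ((m : ℝ) / (j + 1)) ^ s
      ≤ ∑ j ∈ Ico a m, (m : ℝ) ^ s * (((j + 1 : ℕ) : ℝ) ^ (1 - s) - (j : ℝ) ^ (1 - s)) / (1 - s) := by
        refine sum_le_sum fun j _ => ?_
        rw [Real.div_rpow hm (by positivity), le_div_iff₀ h1s, div_eq_mul_inv, mul_assoc,
          ← Real.rpow_neg (by positivity), mul_comm (_ ^ (-s))]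
        push_cast
        exact mul_le_mul_of_nonneg_left
          (one_sub_mul_rpow_neg_le_sub_rpow hs0 hs1.le j.cast_nonneg) (by positivity)
    _ = ((m : ℝ) ^ s * (m : ℝ) ^ (1 - s) - (m : ℝ) ^ s * (a : ℝ) ^ (1 - s)) / (1 - s) := by
        rw [← sum_div, ← mul_sum, sum_Ico_sub (fun j : ℕ => (j : ℝ) ^ (1 - s)) ham, mul_sub]
    _ ≤ (m - a) / (1 - s) := by
        have ha : (0 : ℝ) ≤ a := a.cast_nonneg
        have hmm : (m : ℝ) ^ s * (m : ℝ) ^ (1 - s) = m := by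
          rw [← Real.rpow_add' hm hexp, add_sub_cancel, Real.rpow_one]
        have haa : (a : ℝ) ≤ (m : ℝ) ^ s * (a : ℝ) ^ (1 - s) :=
          calc (a : ℝ) = (a : ℝ) ^ s * (a : ℝ) ^ (1 - s) := by
                rw [← Real.rpow_add' ha hexp, add_sub_cancel, Real.rpow_one]
            _ ≤ (m : ℝ) ^ s * (a : ℝ) ^ (1 - s) := by gcongr
        gcongr
        linarith

lemma sum_range_sum_Icc_mul_div_rpow_le (hs0 : 0 ≤ s) (hs1 : s < 1) (n N : ℕ)
    {c : ℕ → ℝ} (hc : ∀ m, 0 ≤ c m) :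
    ∑ j ∈ range N, ∑ m ∈ Icc (j + 1) (j + 1 + n), c m * ((m : ℝ) / (j + 1)) ^ s ≤
      (n + 1) / (1 - s) * ∑ m ∈ Icc 1 (N + n), c m := by
  rw [sum_comm' (t' := Icc 1 (N + n)) (s' := fun m => Ico (m - (n + 1)) m ∩ range N)
    (fun j m => by simp only [mem_range, mem_Icc, mem_Ico, mem_inter]; omega), mul_sum]
  refine sum_le_sum fun m _ => ?_
  rw [← mul_sum, mul_comm _ (c m)]
  refine mul_le_mul_of_nonneg_left ?_ (hc m)
  have hwidth : (m : ℝ) - (m - (n + 1) : ℕ) ≤ n + 1 := by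
    have : m ≤ m - (n + 1) + n + 1 := by omega
    have : (m : ℝ) ≤ (m - (n + 1) : ℕ) + n + 1 := by exact_mod_cast this
    linarith
  calc ∑ j ∈ Ico (m - (n + 1)) m ∩ range N, ((m : ℝ) / (j + 1)) ^ s
      ≤ ∑ j ∈ Ico (m - (n + 1)) m, ((m : ℝ) / (j + 1)) ^ s :=
        sum_le_sum_of_subset_of_nonneg inter_subset_left fun _ _ _ => by positivity
    _ ≤ (m - (m - (n + 1) : ℕ)) / (1 - s) := sum_Ico_div_rpow_le hs0 hs1 (m.sub_le _)
    _ ≤ (n + 1) / (1 - s) := by gcongr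

end

lemma sum_range_sum_Icc_mul_mul_rpow_le {η : ℝ} (hη0 : 0 ≤ η) (hη : η < 1 / 2) (n N : ℕ)
    (γ δ : ℕ → ℝ) :
    ∑ j ∈ range N, ∑ j' ∈ Icc (j + 1) (j + 1 + n), γ (j + 1) * δ j' * ((j' : ℝ) / (j + 1)) ^ η ≤
      (n + 1) / 2 *
        (∑ j ∈ range N, γ (j + 1) ^ 2 + (∑ m ∈ Icc 1 (N + n), δ m ^ 2) / (1 - 2 * η)) := by
  have amgm (a b : ℝ) {x : ℝ} (hx : 0 ≤ x) :
      a * b * x ^ η ≤ a ^ 2 / 2 + b ^ 2 * x ^ (2 * η) / 2 := by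
    have : x ^ (2 * η) = (x ^ η) ^ 2 := by
      rw [← Real.rpow_natCast, ← Real.rpow_mul hx, mul_comm]; norm_num
    rw [this]
    nlinarith [sq_nonneg (a - b * x ^ η)]
  have hcol := sum_range_sum_Icc_mul_div_rpow_le (by linarith : 0 ≤ 2 * η) (by linarith) n N
    (c := fun m => δ m ^ 2) fun m => sq_nonneg _
  calc _ ≤ ∑ j ∈ range N, ∑ j' ∈ Icc (j + 1) (j + 1 + n),
          (γ (j + 1) ^ 2 / 2 + δ j' ^ 2 * ((j' : ℝ) / (j + 1)) ^ (2 * η) / 2) :=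
        sum_le_sum fun j _ => sum_le_sum fun j' _ => amgm _ _ (by positivity)
    _ = (n + 1) / 2 * ∑ j ∈ range N, γ (j + 1) ^ 2 + (∑ j ∈ range N, ∑ j' ∈ Icc (j + 1) (j + 1 + n),
          δ j' ^ 2 * ((j' : ℝ) / (j + 1)) ^ (2 * η)) / 2 := by
        simp only [sum_add_distrib, sum_const, Nat.card_Icc, ← sum_div, mul_sum, nsmul_eq_mul]
        congr 1
        refine sum_congr rfl fun j _ => ?_
        rw [show j + 1 + n + 1 - (j + 1) = n + 1 by omega]
        push_cast
        ring
    _ ≤ (n + 1) / 2 * ∑ j ∈ range N, γ (j + 1) ^ 2 +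
          (n + 1) / (1 - 2 * η) * (∑ m ∈ Icc 1 (N + n), δ m ^ 2) / 2 := by gcongr
    _ = _ := by ring

/-- For `0 < η < 1/2` there is a constant `c₁ > 0` such that
`(1/(n+1)) ∑_{j≥1} ∑_{j ≤ j' ≤ j+n} γ_j δ_{j'} (j'/j)^η ≤ c₁`
for all `n` and all nonnegative sequences with `∑ γ_j² = ∑ δ_{j'}² = 1`.
(Sequences are indexed by `j ≥ 1`, encoded here as `j + 1` with `j : ℕ`.) -/
theorem stmt_4 (η : ℝ) (hη0 : 0 < η) (hη : η < 1 / 2) :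
    ∃ c₁ > 0, ∀ (n : ℕ) (γ δ : ℕ → ℝ),
      (∀ j, 0 ≤ γ j) → (∀ j, 0 ≤ δ j) →
      (∑' j : ℕ, γ (j + 1) ^ 2) = 1 → (∑' j : ℕ, δ (j + 1) ^ 2) = 1 →
      Summable (fun j : ℕ => ∑ j' ∈ Finset.Icc (j + 1) (j + 1 + n),
        γ (j + 1) * δ j' * ((j' : ℝ) / ((j : ℝ) + 1)) ^ η) ∧
      (1 / ((n : ℝ) + 1)) * ∑' j : ℕ, ∑ j' ∈ Finset.Icc (j + 1) (j + 1 + n),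
        γ (j + 1) * δ j' * ((j' : ℝ) / ((j : ℝ) + 1)) ^ η ≤ c₁ := by
  have hη1 : 0 < 1 - 2 * η := by linarith
  refine ⟨(1 + 1 / (1 - 2 * η)) / 2, by positivity, fun n γ δ hγ hδ hγ1 hδ1 => ?_⟩
  have hγs : Summable fun j => γ (j + 1) ^ 2 := by
    by_contra h; simp [tsum_eq_zero_of_not_summable h] at hγ1
  have hδs : Summable fun j => δ (j + 1) ^ 2 := by
    by_contra h; simp [tsum_eq_zero_of_not_summable h] at hδ1
  have hterm_nonneg (j : ℕ) : 0 ≤ ∑ j' ∈ Icc (j + 1) (j + 1 + n),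
      γ (j + 1) * δ j' * ((j' : ℝ) / ((j : ℝ) + 1)) ^ η :=
    sum_nonneg fun j' _ => by have := hγ (j + 1); have := hδ j'; positivity
  have hpartial (N : ℕ) : ∑ j ∈ range N, ∑ j' ∈ Icc (j + 1) (j + 1 + n),
      γ (j + 1) * δ j' * ((j' : ℝ) / ((j : ℝ) + 1)) ^ η ≤ (n + 1) * ((1 + 1 / (1 - 2 * η)) / 2) := by
    have hγN : ∑ j ∈ range N, γ (j + 1) ^ 2 ≤ 1 :=
      hγ1 ▸ hγs.sum_le_tsum _ fun _ _ => sq_nonneg _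
    have hδN : ∑ m ∈ Icc 1 (N + n), δ m ^ 2 ≤ 1 := by
      rw [← Ico_add_one_right_eq_Icc, sum_Ico_eq_sum_range, Nat.add_sub_cancel, ← hδ1]
      simpa only [add_comm 1] using hδs.sum_le_tsum (range (N + n)) fun _ _ => sq_nonneg _
    calc _ ≤ (n + 1) / 2 *
          (∑ j ∈ range N, γ (j + 1) ^ 2 + (∑ m ∈ Icc 1 (N + n), δ m ^ 2) / (1 - 2 * η)) :=
          sum_range_sum_Icc_mul_mul_rpow_le hη0.le hη n N γ δ
      _ ≤ (n + 1) / 2 * (1 + 1 / (1 - 2 * η)) := by gcongr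
      _ = _ := by ring
  refine ⟨summable_of_sum_range_le hterm_nonneg hpartial, ?_⟩
  rw [one_div, inv_mul_le_iff₀ (by positivity)]
  exact Real.tsum_le_of_sum_range_le hterm_nonneg hpartial
end

section
/- Let T be a bounded operator on a complex Hilbert space H and let C > 0 satisfy ‖Σ_{j=0}^{N−1} (N−j) λ^j T^j‖ ≤ C·N² for every integer N ≥ 1 and every λ ∈ ℂ with |λ| = 1. Then for every x ∈ H with ‖x‖ = 1 and every integer N ≥ 1, Σ_{j=0}^{N−1} ‖T^j x‖² ≤ 16 C² N². -/
/-!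
Take `M = 2N`. Discrete Parseval over the `M`-th roots of unity `ω^k` turns the hypothesis,
applied to the vectors `∑_{j<M} (M - j) ω^{kj} T^j x`, into
`∑_{j<M} (M - j)² ‖T^j x‖² ≤ C² M⁴`; for `j < N` the weight `(M - j)²` is at least `N²`.
-/

open Finset ComplexConjugate
open scoped InnerProductSpace

namespace IsPrimitiveRoot

variable {M : ℕ} {ω : ℂ}

theorem sum_conj_pow_mul_pow (hω : IsPrimitiveRoot ω M) {j j' : ℕ} (hj : j < M) (hj' : j' < M) :
    ∑ k ∈ range M, conj ((ω ^ k) ^ j) * (ω ^ k) ^ j' = if j = j' then (M : ℂ) else 0 := by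
  have hM : M ≠ 0 := by omega
  have hω0 : ω ≠ 0 := hω.ne_zero hM
  have hterm : ∀ k, conj ((ω ^ k) ^ j) * (ω ^ k) ^ j' = (ω ^ j' / ω ^ j) ^ k := fun k => by
    rw [← Complex.inv_eq_conj (by simp [hω.norm'_eq_one hM]), div_pow, ← pow_mul, ← pow_mul,
      mul_comm k, mul_comm k, pow_mul, pow_mul, inv_mul_eq_div]
  simp only [hterm]
  split_ifs with hjj
  · simp [hjj, hω0]
  · have hne : ω ^ j' / ω ^ j ≠ 1 := fun h =>
      hjj (hω.pow_inj hj hj' (div_eq_one_iff_eq (pow_ne_zero _ hω0) |>.mp h).symm)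
    rw [geom_sum_eq hne, div_pow, ← pow_mul, ← pow_mul, mul_comm j', mul_comm j, pow_mul, pow_mul,
      hω.pow_eq_one]
    simp

theorem sum_norm_sq_sum_pow_smul {E : Type*} [NormedAddCommGroup E] [InnerProductSpace ℂ E]
    (hω : IsPrimitiveRoot ω M) (y : ℕ → E) :
    ∑ k ∈ range M, ‖∑ j ∈ range M, (ω ^ k) ^ j • y j‖ ^ 2 = M * ∑ j ∈ range M, ‖y j‖ ^ 2 := by
  have hsq (v : E) : ((‖v‖ ^ 2 : ℝ) : ℂ) = ⟪v, v⟫_ℂ := by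
    push_cast; exact (inner_self_eq_norm_sq_to_K v).symm
  apply Complex.ofReal_injective
  simp only [Complex.ofReal_sum, Complex.ofReal_mul, Complex.ofReal_natCast, hsq, sum_inner,
    inner_sum, inner_smul_left, inner_smul_right, mul_sum]
  calc ∑ k ∈ range M, ∑ j' ∈ range M, ∑ j ∈ range M,
          (ω ^ k) ^ j' * (conj ((ω ^ k) ^ j) * ⟪y j, y j'⟫_ℂ)
      = ∑ j' ∈ range M, ∑ j ∈ range M,
          (∑ k ∈ range M, conj ((ω ^ k) ^ j) * (ω ^ k) ^ j') * ⟪y j, y j'⟫_ℂ := by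
        rw [sum_comm]
        refine sum_congr rfl fun j' _ => ?_
        rw [sum_comm]
        simp only [sum_mul]
        exact sum_congr rfl fun j _ => sum_congr rfl fun k _ => by ring
    _ = ∑ j' ∈ range M, M * ⟪y j', y j'⟫_ℂ := by
        refine sum_congr rfl fun j' hj' => ?_
        rw [sum_congr rfl fun j hj => by
          rw [hω.sum_conj_pow_mul_pow (mem_range.1 hj) (mem_range.1 hj'), ite_mul, zero_mul]]
        rw [sum_ite_eq', if_pos hj']

end IsPrimitiveRoot

theorem sum_norm_sq_le_sq_of_norm_sum_pow_smul_le {E : Type*} [NormedAddCommGroup E]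
    [InnerProductSpace ℂ E] {M : ℕ} (hM : M ≠ 0) (y : ℕ → E) {B : ℝ}
    (hB : ∀ z : ℂ, ‖z‖ = 1 → ‖∑ j ∈ range M, z ^ j • y j‖ ≤ B) :
    ∑ j ∈ range M, ‖y j‖ ^ 2 ≤ B ^ 2 := by
  obtain ⟨ω, hω⟩ : ∃ ω : ℂ, IsPrimitiveRoot ω M := ⟨_, Complex.isPrimitiveRoot_exp M hM⟩
  refine le_of_mul_le_mul_left ?_ (by positivity : (0 : ℝ) < M)
  calc (M : ℝ) * ∑ j ∈ range M, ‖y j‖ ^ 2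
      = ∑ k ∈ range M, ‖∑ j ∈ range M, (ω ^ k) ^ j • y j‖ ^ 2 :=
        (hω.sum_norm_sq_sum_pow_smul y).symm
    _ ≤ ∑ k ∈ range M, B ^ 2 := sum_le_sum fun k _ =>
        pow_le_pow_left₀ (norm_nonneg _) (hB _ (by simp [hω.norm'_eq_one hM])) 2
    _ = M * B ^ 2 := by simp

theorem sq_mul_sum_range_le_sum_range_two_mul (a : ℕ → ℝ) (ha : ∀ j, 0 ≤ a j) (N : ℕ) :
    (N : ℝ) ^ 2 * ∑ j ∈ range N, a j ≤ ∑ j ∈ range (2 * N), (2 * N - j : ℝ) ^ 2 * a j := by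
  rw [mul_sum]
  calc ∑ j ∈ range N, (N : ℝ) ^ 2 * a j ≤ ∑ j ∈ range N, (2 * N - j : ℝ) ^ 2 * a j :=
        sum_le_sum fun j hj => by
          have hjN : (j : ℝ) < N := by exact_mod_cast mem_range.1 hj
          exact mul_le_mul_of_nonneg_right (pow_le_pow_left₀ (by positivity) (by linarith) 2) (ha j)
    _ ≤ ∑ j ∈ range (2 * N), (2 * N - j : ℝ) ^ 2 * a j :=
        sum_le_sum_of_subset_of_nonneg (range_subset_range.2 (by omega)) fun j _ _ =>
          mul_nonneg (sq_nonneg _) (ha j)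

theorem stmt_7_general {H : Type*} [NormedAddCommGroup H] [InnerProductSpace ℂ H]
    (T : H →L[ℂ] H) (C : ℝ)
    (hT : ∀ N : ℕ, 1 ≤ N → ∀ z : ℂ, ‖z‖ = 1 →
      ‖∑ j ∈ Finset.range N, (((N : ℂ) - (j : ℂ)) * z ^ j) • T ^ j‖ ≤ C * (N : ℝ) ^ 2) :
    ∀ x : H, ‖x‖ = 1 → ∀ N : ℕ, 1 ≤ N →
      ∑ j ∈ Finset.range N, ‖(T ^ j) x‖ ^ 2 ≤ 16 * C ^ 2 * (N : ℝ) ^ 2 := by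
  intro x hx N hN
  have hweighted := sum_norm_sq_le_sq_of_norm_sum_pow_smul_le (M := 2 * N) (by omega)
    (fun j => (((2 * N : ℕ) : ℂ) - j) • (T ^ j) x) (B := C * ((2 * N : ℕ) : ℝ) ^ 2)
    fun z hz => by
      calc _ = ‖(∑ j ∈ range (2 * N), ((((2 * N : ℕ) : ℂ) - j) * z ^ j) • T ^ j) x‖ := by
            simp only [_root_.sum_apply, smul_apply, smul_smul, mul_comm]
        _ ≤ _ := (ContinuousLinearMap.le_opNorm _ _).trans <| by
            rw [hx, mul_one]; exact hT _ (by omega) z hz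
  have hnorm (j : ℕ) : ‖(((2 * N : ℕ) : ℂ) - j) • (T ^ j) x‖ ^ 2
      = (2 * N - j : ℝ) ^ 2 * ‖(T ^ j) x‖ ^ 2 := by
    rw [norm_smul, mul_pow, show ((2 * N : ℕ) : ℂ) - j = ((2 * N - j : ℝ) : ℂ) by push_cast; ring,
      Complex.norm_real, Real.norm_eq_abs, sq_abs]
  simp only [hnorm] at hweighted
  have hlower := sq_mul_sum_range_le_sum_range_two_mul _ (fun j => sq_nonneg ‖(T ^ j) x‖) N
  refine le_of_mul_le_mul_left ?_ (by positivity : (0 : ℝ) < (N : ℝ) ^ 2)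
  calc (N : ℝ) ^ 2 * ∑ j ∈ range N, ‖(T ^ j) x‖ ^ 2
      ≤ (C * ((2 * N : ℕ) : ℝ) ^ 2) ^ 2 := hlower.trans hweighted
    _ = (N : ℝ) ^ 2 * (16 * C ^ 2 * N ^ 2) := by push_cast; ring

/-- If `‖∑_{j<N} (N-j) λ^j T^j‖ ≤ C N²` for all `N ≥ 1` and all unimodular `λ`, then for every
unit vector `x` and every `N ≥ 1`, `∑_{j<N} ‖T^j x‖² ≤ 16 C² N²`. -/
theorem stmt_7 {H : Type*} [NormedAddCommGroup H] [InnerProductSpace ℂ H] [CompleteSpace H]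
    (T : H →L[ℂ] H) (C : ℝ) (hC : 0 < C)
    (hT : ∀ N : ℕ, 1 ≤ N → ∀ z : ℂ, ‖z‖ = 1 →
      ‖∑ j ∈ Finset.range N, (((N : ℂ) - (j : ℂ)) * z ^ j) • T ^ j‖ ≤ C * (N : ℝ) ^ 2) :
    ∀ x : H, ‖x‖ = 1 → ∀ N : ℕ, 1 ≤ N →
      ∑ j ∈ Finset.range N, ‖(T ^ j) x‖ ^ 2 ≤ 16 * C ^ 2 * (N : ℝ) ^ 2 :=
  stmt_7_general T C hT
end

section
/- Let T be a bounded operator on a complex Hilbert space H and let C > 0 satisfy ‖Σ_{j=0}^{N−1} (N−j) λ^j T^j‖ ≤ C·N² for every integer N ≥ 1 and every λ ∈ ℂ with |λ| = 1. Let 0 < M < N be integers and let x ∈ H with ‖x‖ = 1 and T^N x ≠ 0. Then Σ_{j=0}^{M−1} ‖T^N x‖²/‖T^{N−j} x‖² ≤ 16 C² M². -/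
/-!
Put `L = 2M`, `y = T^N x`, `u k = T^(N-k) x` (so `T^k (u k) = y`) and, for an `L`-th root of unity
`z`, test the second Cesàro sum `K(z) = ∑_{j<L} (L - j) z^j T^j` against `y` and
`w(z) = ∑_{k<M} z̄^k ‖u k‖⁻² u k`. Averaged over the roots of unity, `⟪y, K(z) w(z)⟫` keeps only
the diagonal terms `(L - k) ‖u k‖⁻² ⟪y, T^k (u k)⟫ = (L - k) ‖y‖² / ‖u k‖²`, whose sum is at least
`M S ‖y‖²` with `S = ∑_{k<M} ‖u k‖⁻²`, while by Parseval the average of `‖w(z)‖²` is `S`. The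
Kreiss bound `‖K(z)‖ ≤ C L²` and Cauchy–Schwarz give `M S ‖y‖² ≤ C L² ‖y‖ √S`, i.e.
`S ‖y‖² ≤ 16 C² M²`.
-/

open Finset ComplexConjugate
open scoped InnerProductSpace

namespace IsPrimitiveRoot

variable {ζ : ℂ} {L : ℕ}

lemma pow_pow_mul_conj_pow_pow (hζ : IsPrimitiveRoot ζ L) (hL : 0 < L) (m j k : ℕ) :
    (ζ ^ m) ^ j * conj (ζ ^ m) ^ k = (ζ ^ j / ζ ^ k) ^ m := by
  rw [← Complex.inv_eq_conj (by rw [norm_pow, hζ.norm'_eq_one hL.ne', one_pow]), div_pow,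
    div_eq_mul_inv, inv_pow, ← pow_mul, ← pow_mul, ← pow_mul, ← pow_mul, mul_comm j, mul_comm k]

lemma sum_pow_pow_mul_conj_pow_pow (hζ : IsPrimitiveRoot ζ L) {j k : ℕ} (hj : j < L)
    (hk : k < L) :
    ∑ m ∈ range L, (ζ ^ m) ^ j * conj (ζ ^ m) ^ k = if j = k then (L : ℂ) else 0 := by
  have hL : 0 < L := by omega
  simp_rw [hζ.pow_pow_mul_conj_pow_pow hL]
  split_ifs with hjk
  · simp [hjk, div_self (pow_ne_zero _ (hζ.ne_zero hL.ne'))]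
  · have hne : ζ ^ j / ζ ^ k ≠ 1 := fun h =>
      hjk (hζ.pow_inj hj hk (div_eq_one_iff_eq (pow_ne_zero _ (hζ.ne_zero hL.ne')) |>.mp h))
    rw [geom_sum_eq hne, div_pow, ← pow_mul, ← pow_mul, pow_mul', pow_mul' ζ k, hζ.pow_eq_one,
      one_pow, one_pow, div_one, sub_self, zero_div]

lemma sum_sum_sum_pow_pow_mul_conj_pow_pow_mul (hζ : IsPrimitiveRoot ζ L) {P Q : ℕ}
    (hQP : Q ≤ P) (hPL : P ≤ L) (f : ℕ → ℕ → ℂ) :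
    ∑ m ∈ range L, ∑ j ∈ range P, ∑ k ∈ range Q, (ζ ^ m) ^ j * conj (ζ ^ m) ^ k * f j k
      = L * ∑ k ∈ range Q, f k k := by
  calc _ = ∑ k ∈ range Q, ∑ j ∈ range P,
        (∑ m ∈ range L, (ζ ^ m) ^ j * conj (ζ ^ m) ^ k) * f j k := by
        simp_rw [sum_mul]
        rw [sum_comm, sum_congr rfl fun j _ => sum_comm, sum_comm]
    _ = ∑ k ∈ range Q, ∑ j ∈ range P, if j = k then L * f k k else 0 := by
        refine sum_congr rfl fun k hk => sum_congr rfl fun j hj => ?_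
        rw [mem_range] at hj hk
        rw [hζ.sum_pow_pow_mul_conj_pow_pow (by omega) (by omega), ite_mul, zero_mul]
        split_ifs with h <;> simp [h]
    _ = _ := by
        rw [mul_sum]
        refine sum_congr rfl fun k hk => ?_
        rw [sum_ite_eq', if_pos (mem_range.mpr ((mem_range.mp hk).trans_le hQP))]

end IsPrimitiveRoot

lemma natCast_mul_sum_le_sum_sub_mul {M L : ℕ} (hML : 2 * M ≤ L) {t : ℕ → ℝ}
    (ht : ∀ k, 0 ≤ t k) :
    M * ∑ k ∈ range M, t k ≤ ∑ k ∈ range M, (L - k) * t k := by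
  rw [mul_sum]
  refine sum_le_sum fun k hk => mul_le_mul_of_nonneg_right ?_ (ht k)
  have hkM : k + M ≤ L := by have := mem_range.mp hk; omega
  rw [le_sub_iff_add_le']
  exact_mod_cast hkM

section

variable {H : Type*} [NormedAddCommGroup H] [InnerProductSpace ℂ H]

/-- `∑_{j<N} (N - j) z^j T^j = ∑_{n=1}^{N} ∑_{j<n} (z T)^j`. -/
def secondCesaroSum (T : H →L[ℂ] H) (N : ℕ) (z : ℂ) : H →L[ℂ] H :=
  ∑ j ∈ range N, (((N : ℂ) - (j : ℂ)) * z ^ j) • T ^ j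

variable {ζ : ℂ} {L M : ℕ}

lemma ofReal_norm_sq_eq_inner_self (v : H) : ((‖v‖ ^ 2 : ℝ) : ℂ) = ⟪v, v⟫_ℂ := by
  rw [inner_self_eq_norm_sq_to_K, Complex.ofReal_pow]
  rfl

lemma IsPrimitiveRoot.sum_inner_secondCesaroSum_apply (hζ : IsPrimitiveRoot ζ L) (hML : M ≤ L)
    {T : H →L[ℂ] H} {u : ℕ → H} {y : H} (hu : ∀ k < M, (T ^ k) (u k) = y) (t : ℕ → ℂ) :
    ∑ m ∈ range L,
        ⟪y, secondCesaroSum T L (ζ ^ m) (∑ k ∈ range M, (conj (ζ ^ m) ^ k * t k) • u k)⟫_ℂ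
      = L * ∑ k ∈ range M, (L - k) * t k * ⟪y, y⟫_ℂ := by
  have expand : ∀ z : ℂ,
      ⟪y, secondCesaroSum T L z (∑ k ∈ range M, (conj z ^ k * t k) • u k)⟫_ℂ
        = ∑ j ∈ range L, ∑ k ∈ range M,
            z ^ j * conj z ^ k * ((L - j) * t k * ⟪y, (T ^ j) (u k)⟫_ℂ) := fun z => by
    simp only [secondCesaroSum, FunLike.coe_sum, Finset.sum_apply, FunLike.coe_smul,
      Pi.smul_apply, map_sum, map_smul, inner_sum, inner_smul_right, mul_sum]
    rw [sum_comm]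
    exact sum_congr rfl fun j _ => sum_congr rfl fun k _ => by ring
  simp_rw [expand]
  rw [hζ.sum_sum_sum_pow_pow_mul_conj_pow_pow_mul hML le_rfl]
  refine congrArg _ (sum_congr rfl fun k hk => ?_)
  rw [hu k (mem_range.mp hk)]

lemma IsPrimitiveRoot.sum_norm_sq_sum_conj_pow_mul_smul (hζ : IsPrimitiveRoot ζ L) (hML : M ≤ L)
    (t : ℕ → ℂ) (u : ℕ → H) :
    ∑ m ∈ range L, ‖∑ k ∈ range M, (conj (ζ ^ m) ^ k * t k) • u k‖ ^ 2
      = L * ∑ k ∈ range M, ‖t k‖ ^ 2 * ‖u k‖ ^ 2 := by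
  have expand : ∀ z : ℂ,
      ⟪∑ k ∈ range M, (conj z ^ k * t k) • u k, ∑ k ∈ range M, (conj z ^ k * t k) • u k⟫_ℂ
        = ∑ j ∈ range M, ∑ k ∈ range M,
            z ^ j * conj z ^ k * (conj (t j) * t k * ⟪u j, u k⟫_ℂ) := fun z => by
    simp only [sum_inner, inner_sum, inner_smul_left, inner_smul_right, map_mul, map_pow,
      Complex.conj_conj, mul_sum]
    rw [sum_comm]
    exact sum_congr rfl fun j _ => sum_congr rfl fun k _ => by ring
  apply Complex.ofReal_injective
  simp only [Complex.ofReal_sum, Complex.ofReal_mul, Complex.ofReal_natCast,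
    ofReal_norm_sq_eq_inner_self (H := H), expand]
  rw [hζ.sum_sum_sum_pow_pow_mul_conj_pow_pow_mul le_rfl hML]
  simp only [Complex.conj_mul', Complex.ofReal_pow]

lemma IsPrimitiveRoot.sum_norm_sq_sum_conj_pow_mul_inv_sq_norm_smul (hζ : IsPrimitiveRoot ζ L)
    (hML : M ≤ L) (u : ℕ → H) :
    ∑ m ∈ range L, ‖∑ k ∈ range M, (conj (ζ ^ m) ^ k * ((‖u k‖ ^ 2)⁻¹ : ℝ)) • u k‖ ^ 2
      = L * ∑ k ∈ range M, (‖u k‖ ^ 2)⁻¹ := by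
  rw [hζ.sum_norm_sq_sum_conj_pow_mul_smul hML]
  refine congrArg _ (sum_congr rfl fun k _ => ?_)
  -- `(a⁻¹)² a = a⁻¹` also holds for `a = 0`, so `u k = 0` needs no special treatment
  rw [Complex.norm_real, Real.norm_eq_abs, sq_abs, sq, mul_right_comm]
  simpa using mul_inv_mul_cancel (‖u k‖ ^ 2)⁻¹

theorem norm_sum_inner_apply_le {ι : Type*} (s : Finset ι) {A : ι → H →L[ℂ] H} {c : ℝ}
    (hA : ∀ i ∈ s, ‖A i‖ ≤ c) (y : H) (w : ι → H) :
    ‖∑ i ∈ s, ⟪y, A i (w i)⟫_ℂ‖ ≤ c * ‖y‖ * ∑ i ∈ s, ‖w i‖ := by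
  rw [mul_sum]
  refine (norm_sum_le _ _).trans (sum_le_sum fun i hi => ?_)
  calc _ ≤ ‖y‖ * ‖A i (w i)‖ := norm_inner_le_norm _ _
    _ ≤ ‖y‖ * (c * ‖w i‖) := by gcongr; exact (A i).le_of_opNorm_le (hA i hi) _
    _ = _ := by ring

theorem sq_norm_mul_sum_inv_sq_norm_le {T : H →L[ℂ] H} {C : ℝ} {u : ℕ → H} {y : H} (hM : 0 < M)
    (hT : ∀ z : ℂ, ‖z‖ = 1 → ‖secondCesaroSum T (2 * M) z‖ ≤ C * ((2 * M : ℕ) : ℝ) ^ 2)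
    (hu : ∀ k < M, (T ^ k) (u k) = y) :
    ‖y‖ ^ 2 * ∑ k ∈ range M, (‖u k‖ ^ 2)⁻¹ ≤ 16 * C ^ 2 * M ^ 2 := by
  set L := 2 * M with hL
  have hζ : IsPrimitiveRoot (Complex.exp (2 * Real.pi * Complex.I / L)) L :=
    Complex.isPrimitiveRoot_exp L (by omega)
  set ζ := Complex.exp (2 * Real.pi * Complex.I / L)
  set t : ℕ → ℝ := fun k => (‖u k‖ ^ 2)⁻¹
  set S := ∑ k ∈ range M, t k
  set w : ℕ → H := fun m => ∑ k ∈ range M, (conj (ζ ^ m) ^ k * t k) • u k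
  set P := ∑ m ∈ range L, ‖w m‖
  set X := ‖y‖ ^ 2 * S
  have hupper : ‖∑ m ∈ range L, ⟪y, secondCesaroSum T L (ζ ^ m) (w m)⟫_ℂ‖
      ≤ C * L ^ 2 * ‖y‖ * P :=
    norm_sum_inner_apply_le _
      (fun m _ => hT _ (by rw [norm_pow, hζ.norm'_eq_one (by omega), one_pow])) y w
  have hlower : L * (M * X) ≤ ‖∑ m ∈ range L, ⟪y, secondCesaroSum T L (ζ ^ m) (w m)⟫_ℂ‖ := by
    have hreal : (L * ∑ k ∈ range M, (L - k) * (t k : ℂ) * ⟪y, y⟫_ℂ : ℂ)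
        = ((L * ((∑ k ∈ range M, (L - k) * t k) * ‖y‖ ^ 2) : ℝ) : ℂ) := by
      rw [← ofReal_norm_sq_eq_inner_self, sum_mul]
      push_cast
      rfl
    rw [hζ.sum_inner_secondCesaroSum_apply (by omega) hu, hreal, Complex.norm_real,
      Real.norm_eq_abs]
    refine le_trans ?_ (le_abs_self _)
    have hweights := natCast_mul_sum_le_sum_sub_mul hL.ge fun k => (by positivity : 0 ≤ t k)
    calc (L : ℝ) * (M * X) = L * (M * S * ‖y‖ ^ 2) := by ring
      _ ≤ _ := by gcongr
  have hCS : P ^ 2 ≤ L * (L * S) := by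
    have := sq_sum_le_card_mul_sum_sq (s := range L) (f := fun m => ‖w m‖)
    rwa [card_range, hζ.sum_norm_sq_sum_conj_pow_mul_inv_sq_norm_smul (by omega)] at this
  have hMX : M * X ≤ C * L * ‖y‖ * P :=
    le_of_mul_le_mul_left ((hlower.trans hupper).trans_eq (by ring)) (by positivity)
  have hsq : (M * X) ^ 2 ≤ C ^ 2 * L ^ 4 * X :=
    calc (M * X) ^ 2 ≤ (C * L * ‖y‖ * P) ^ 2 := pow_le_pow_left₀ (by positivity) hMX 2
      _ = C ^ 2 * L ^ 2 * ‖y‖ ^ 2 * P ^ 2 := by ring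
      _ ≤ C ^ 2 * L ^ 2 * ‖y‖ ^ 2 * (L * (L * S)) := by gcongr
      _ = C ^ 2 * L ^ 4 * X := by ring
  rcases (show 0 ≤ X by positivity).eq_or_lt with hX | hX
  · rw [← hX]; positivity
  · refine le_of_mul_le_mul_left ?_ (by positivity : (0 : ℝ) < M ^ 2 * X)
    push_cast [hL] at hsq
    linarith

end

theorem stmt_8_general {H : Type*} [NormedAddCommGroup H] [InnerProductSpace ℂ H]
    (T : H →L[ℂ] H) (C : ℝ)
    (hT : ∀ N : ℕ, 1 ≤ N → ∀ z : ℂ, ‖z‖ = 1 →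
      ‖∑ j ∈ Finset.range N, (((N : ℂ) - (j : ℂ)) * z ^ j) • T ^ j‖ ≤ C * (N : ℝ) ^ 2)
    (M N : ℕ) (hM : 0 < M) (hMN : M < N)
    (x : H) :
    ∑ j ∈ Finset.range M, ‖(T ^ N) x‖ ^ 2 / ‖(T ^ (N - j)) x‖ ^ 2 ≤ 16 * C ^ 2 * (M : ℝ) ^ 2 := by
  have hu : ∀ k < M, (T ^ k) ((T ^ (N - k)) x) = (T ^ N) x := fun k hk => by
    show (T ^ k * T ^ (N - k)) x = _
    rw [← pow_add, Nat.add_sub_cancel' (by omega)]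
  simpa only [div_eq_mul_inv, ← mul_sum] using
    sq_norm_mul_sum_inv_sq_norm_le hM (fun z hz => hT (2 * M) (by omega) z hz) hu

/-- If `‖∑_{j<N} (N-j) λ^j T^j‖ ≤ C N²` for all `N ≥ 1` and unimodular `λ`, then for integers
`0 < M < N` and a unit vector `x` with `T^N x ≠ 0`,
`∑_{j<M} ‖T^N x‖² / ‖T^{N-j} x‖² ≤ 16 C² M²`. -/
theorem stmt_8 {H : Type*} [NormedAddCommGroup H] [InnerProductSpace ℂ H] [CompleteSpace H]
    (T : H →L[ℂ] H) (C : ℝ) (hC : 0 < C)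
    (hT : ∀ N : ℕ, 1 ≤ N → ∀ z : ℂ, ‖z‖ = 1 →
      ‖∑ j ∈ Finset.range N, (((N : ℂ) - (j : ℂ)) * z ^ j) • T ^ j‖ ≤ C * (N : ℝ) ^ 2)
    (M N : ℕ) (hM : 0 < M) (hMN : M < N)
    (x : H) (hx : ‖x‖ = 1) (hTN : (T ^ N) x ≠ 0) :
    ∑ j ∈ Finset.range M, ‖(T ^ N) x‖ ^ 2 / ‖(T ^ (N - j)) x‖ ^ 2 ≤ 16 * C ^ 2 * (M : ℝ) ^ 2 :=
  stmt_8_general T C hT M N hM hMN x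
end

section
/- Let T be a bounded operator on a complex Hilbert space H and let C > 0 satisfy ‖Σ_{j=0}^{N−1} (N−j) λ^j T^j‖ ≤ C·N² for every integer N ≥ 1 and every λ ∈ ℂ with |λ| = 1. Let N ≥ 1 be an integer and let x ∈ H with ‖x‖ = 1 and T^N x ≠ 0. Then Σ_{j=0}^{N−1} 1/‖T^j x‖ ≥ √N/(4C). -/
/-!
Evaluating the hypothesis at the `N`-th roots of unity and applying Parseval's identity for the
discrete Fourier transform gives `∑_{j<N} (N - j)² ‖T^j x‖² ≤ C² N⁴`, hence
`∑_{j<N} (N - j) ‖T^j x‖ ≤ C N^{5/2}` by Cauchy–Schwarz. A second Cauchy–Schwarz,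
`(∑ (N - j))² ≤ (∑ (N - j) ‖T^j x‖) (∑ (N - j) / ‖T^j x‖)`, together with `∑ (N - j) ≥ N² / 2`
and `∑ (N - j) / ‖T^j x‖ ≤ N ∑ 1 / ‖T^j x‖`, then gives `N⁴ / 4 ≤ C N^{7/2} ∑ 1 / ‖T^j x‖`.
-/

open Finset ComplexConjugate

theorem IsPrimitiveRoot.sum_conj_pow_mul_pow_s9 {ζ : ℂ} {N : ℕ} (hζ : IsPrimitiveRoot ζ N)
    {j k : ℕ} (hj : j < N) (hk : k < N) :
    ∑ m ∈ range N, conj ((ζ ^ m) ^ j) * (ζ ^ m) ^ k = if j = k then (N : ℂ) else 0 := by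
  have hnorm : ‖ζ‖ = 1 := hζ.norm'_eq_one (by omega)
  set u := conj (ζ ^ j) * ζ ^ k
  have hterm (m : ℕ) : conj ((ζ ^ m) ^ j) * (ζ ^ m) ^ k = u ^ m := by
    rw [mul_pow, ← map_pow, pow_right_comm, pow_right_comm ζ m k]
  simp only [hterm]
  split_ifs with hjk
  · subst hjk
    have hu : u = 1 := by simp [u, Complex.conj_mul', hnorm]
    simp [hu]
  · have hu : u ≠ 1 := fun hu => hjk <| hζ.pow_inj hj hk <| by
      have := congrArg (ζ ^ j * ·) hu
      simp only [u, ← mul_assoc, Complex.mul_conj', norm_pow, hnorm] at this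
      exact (by simpa using this : ζ ^ k = ζ ^ j).symm
    have huN : u ^ N = 1 := by
      rw [mul_pow, ← map_pow, ← pow_mul, ← pow_mul, mul_comm j, mul_comm k, pow_mul, pow_mul,
        hζ.pow_eq_one]
      simp
    have := geom_sum_mul u N
    rw [huN, sub_self, mul_eq_zero] at this
    exact this.resolve_right (sub_ne_zero.mpr hu)

section

variable {H : Type*} [NormedAddCommGroup H] [InnerProductSpace ℂ H]

theorem IsPrimitiveRoot.sum_norm_sum_pow_smul_sq {ζ : ℂ} {N : ℕ} (hζ : IsPrimitiveRoot ζ N) (v : ℕ → H) :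
    ∑ m ∈ range N, ‖∑ j ∈ range N, (ζ ^ m) ^ j • v j‖ ^ 2 = N * ∑ j ∈ range N, ‖v j‖ ^ 2 := by
  have hinner (y : H) : ((‖y‖ ^ 2 : ℝ) : ℂ) = inner ℂ y y := by
    rw [inner_self_eq_norm_sq_to_K]; push_cast; rfl
  apply Complex.ofReal_injective
  simp only [Complex.ofReal_sum, Complex.ofReal_mul, Complex.ofReal_natCast, hinner, sum_inner]
  simp only [inner_sum, inner_smul_left, inner_smul_right]
  calc ∑ m ∈ range N, ∑ j ∈ range N, ∑ k ∈ range N,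
          (ζ ^ m) ^ k * (conj ((ζ ^ m) ^ j) * inner ℂ (v j) (v k))
      = ∑ j ∈ range N, ∑ k ∈ range N,
          (∑ m ∈ range N, conj ((ζ ^ m) ^ j) * (ζ ^ m) ^ k) * inner ℂ (v j) (v k) := by
        rw [sum_comm]
        refine sum_congr rfl fun j _ => ?_
        rw [sum_comm]
        refine sum_congr rfl fun k _ => ?_
        rw [sum_mul]
        exact sum_congr rfl fun m _ => by ring
    _ = ∑ j ∈ range N, N * inner ℂ (v j) (v j) := by
        refine sum_congr rfl fun j hj => ?_
        rw [sum_eq_single_of_mem j hj fun k hk hkj => ?_]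
        · rw [hζ.sum_conj_pow_mul_pow_s9 (mem_range.1 hj) (mem_range.1 hj), if_pos rfl]
        · rw [hζ.sum_conj_pow_mul_pow_s9 (mem_range.1 hj) (mem_range.1 hk), if_neg (Ne.symm hkj),
            zero_mul]
    _ = N * ∑ j ∈ range N, inner ℂ (v j) (v j) := by rw [mul_sum]

theorem sum_norm_sq_le_of_norm_sum_pow_smul_le {N : ℕ} (v : ℕ → H) {B : ℝ}
    (h : ∀ z : ℂ, ‖z‖ = 1 → ‖∑ j ∈ range N, z ^ j • v j‖ ≤ B) :
    ∑ j ∈ range N, ‖v j‖ ^ 2 ≤ B ^ 2 := by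
  rcases Nat.eq_zero_or_pos N with rfl | hN
  · simp [sq_nonneg]
  have hζ := Complex.isPrimitiveRoot_exp N hN.ne'
  have hnorm := hζ.norm'_eq_one hN.ne'
  have hsq (m : ℕ) : ‖∑ j ∈ range N, (Complex.exp (2 * Real.pi * Complex.I / N) ^ m) ^ j • v j‖ ^ 2
      ≤ B ^ 2 :=
    pow_le_pow_left₀ (norm_nonneg _) (h _ (by rw [norm_pow, hnorm, one_pow])) 2
  have hmul : (N : ℝ) * ∑ j ∈ range N, ‖v j‖ ^ 2 ≤ N * B ^ 2 := by
    rw [← hζ.sum_norm_sum_pow_smul_sq]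
    exact (sum_le_sum fun m _ => hsq m).trans_eq (by simp)
  exact le_of_mul_le_mul_left hmul (by exact_mod_cast hN)

theorem ContinuousLinearMap.sum_norm_mul_norm_pow_apply_sq_le (T : H →L[ℂ] H) (c : ℕ → ℂ)
    {N : ℕ} {B : ℝ} (hT : ∀ z : ℂ, ‖z‖ = 1 → ‖∑ j ∈ range N, (c j * z ^ j) • T ^ j‖ ≤ B)
    (x : H) : ∑ j ∈ range N, (‖c j‖ * ‖(T ^ j) x‖) ^ 2 ≤ (B * ‖x‖) ^ 2 := by
  have hv (z : ℂ) : ∑ j ∈ range N, z ^ j • c j • (T ^ j) x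
      = (∑ j ∈ range N, (c j * z ^ j) • T ^ j) x := by
    simp only [_root_.sum_apply, _root_.smul_apply, smul_smul, mul_comm]
  simpa only [norm_smul] using sum_norm_sq_le_of_norm_sum_pow_smul_le (fun j => c j • (T ^ j) x)
    fun z hz => by
      rw [hv]
      exact (le_opNorm _ x).trans (mul_le_mul_of_nonneg_right (hT z hz) (norm_nonneg x))

theorem ContinuousLinearMap.pow_apply_ne_zero_of_le {R M : Type*} [Semiring R]
    [TopologicalSpace M] [AddCommMonoid M] [Module R M] (T : M →L[R] M) {x : M} {j N : ℕ}
    (hTN : (T ^ N) x ≠ 0) (hj : j ≤ N) : (T ^ j) x ≠ 0 := by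
  intro h
  apply hTN
  rw [← Nat.sub_add_cancel hj, pow_add, mul_apply_eq_comp, h, map_zero]

end

theorem sum_range_natCast_sub_mul_two (N : ℕ) :
    ∑ j ∈ range N, ((N : ℝ) - j) * 2 = N * (N + 1) := by
  induction N with
  | zero => simp
  | succ n ih =>
    simp only [sum_range_succ, Nat.cast_succ, sub_mul, sum_sub_distrib, add_mul, sum_add_distrib,
      sum_const, card_range, nsmul_eq_mul] at ih ⊢
    linarith

theorem sqrt_div_le_sum_inv_of_sum_sq_le {N : ℕ} (hN : 1 ≤ N) {a : ℕ → ℝ}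
    (ha : ∀ j < N, 0 < a j) {C : ℝ} (hC : 0 < C)
    (hQ : ∑ j ∈ range N, (((N : ℝ) - j) * a j) ^ 2 ≤ (C * N ^ 2) ^ 2) :
    √N / (4 * C) ≤ ∑ j ∈ range N, 1 / a j := by
  set P := ∑ j ∈ range N, ((N : ℝ) - j) * a j
  set S := ∑ j ∈ range N, 1 / a j
  have hNpos : (0 : ℝ) < N := by exact_mod_cast hN
  have hweight : ∀ j ∈ range N, 0 ≤ (N : ℝ) - j := fun j hj => by
    simp only [sub_nonneg, Nat.cast_le, (mem_range.1 hj).le]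
  have hP : P ^ 2 ≤ N * (C * N ^ 2) ^ 2 := by
    have := sq_sum_le_card_mul_sum_sq (s := range N) (f := fun j => ((N : ℝ) - j) * a j)
    rw [card_range] at this
    exact this.trans (mul_le_mul_of_nonneg_left hQ hNpos.le)
  have hS : 0 ≤ S := sum_nonneg fun j hj => (one_div_pos.2 (ha j (mem_range.1 hj))).le
  have hCS : ((N : ℝ) ^ 2 / 2) ^ 2 ≤ P * (N * S) := calc
    ((N : ℝ) ^ 2 / 2) ^ 2 ≤ (∑ j ∈ range N, ((N : ℝ) - j)) ^ 2 := by
      refine pow_le_pow_left₀ (by positivity) ?_ 2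
      have := sum_range_natCast_sub_mul_two N
      rw [← sum_mul] at this
      nlinarith
    _ ≤ P * ∑ j ∈ range N, ((N : ℝ) - j) / a j := by
      refine sum_sq_le_sum_mul_sum_of_sq_le_mul _
        (fun j hj => mul_nonneg (hweight j hj) (ha j (mem_range.1 hj)).le)
        (fun j hj => div_nonneg (hweight j hj) (ha j (mem_range.1 hj)).le) fun j hj => ?_
      refine le_of_eq ?_
      field_simp [(ha j (mem_range.1 hj)).ne']
    _ ≤ P * (N * S) := by
      refine mul_le_mul_of_nonneg_left ?_ (sum_nonneg fun j hj =>
        mul_nonneg (hweight j hj) (ha j (mem_range.1 hj)).le)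
      rw [mul_sum]
      refine sum_le_sum fun j hj => ?_
      rw [mul_one_div]
      exact div_le_div_of_nonneg_right (by linarith [hweight j hj]) (ha j (mem_range.1 hj)).le
  have hsq : (N : ℝ) ^ 7 * N ≤ N ^ 7 * (4 * C * S) ^ 2 := calc
    (N : ℝ) ^ 7 * N = (((N : ℝ) ^ 2 / 2) ^ 2) ^ 2 * 16 := by ring
    _ ≤ (P * (N * S)) ^ 2 * 16 := by gcongr
    _ = P ^ 2 * (N * S) ^ 2 * 16 := by ring
    _ ≤ N * (C * N ^ 2) ^ 2 * (N * S) ^ 2 * 16 := by gcongr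
    _ = N ^ 7 * (4 * C * S) ^ 2 := by ring
  rw [div_le_iff₀ (by positivity), mul_comm S]
  exact (Real.sqrt_le_left (by positivity)).2 (le_of_mul_le_mul_left hsq (by positivity))

theorem stmt_9_general {H : Type*} [NormedAddCommGroup H] [InnerProductSpace ℂ H]
    (T : H →L[ℂ] H) (C : ℝ) (hC : 0 < C)
    (hT : ∀ N : ℕ, 1 ≤ N → ∀ z : ℂ, ‖z‖ = 1 →
      ‖∑ j ∈ Finset.range N, (((N : ℂ) - (j : ℂ)) * z ^ j) • T ^ j‖ ≤ C * (N : ℝ) ^ 2)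
    (N : ℕ) (hN : 1 ≤ N) (x : H) (hx : ‖x‖ = 1) (hTN : (T ^ N) x ≠ 0) :
    Real.sqrt N / (4 * C) ≤ ∑ j ∈ Finset.range N, 1 / ‖(T ^ j) x‖ := by
  have hQ := T.sum_norm_mul_norm_pow_apply_sq_le (fun j => (N : ℂ) - j) (hT N hN) x
  rw [hx, mul_one] at hQ
  refine sqrt_div_le_sum_inv_of_sum_sq_le hN
    (fun j hj => norm_pos_iff.2 (T.pow_apply_ne_zero_of_le hTN hj.le)) hC (le_of_eq_of_le ?_ hQ)
  refine sum_congr rfl fun j hj => ?_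
  have hjN := (mem_range.1 hj).le
  have hweight : ‖(N : ℂ) - j‖ = N - j := by
    rw [← Nat.cast_sub hjN, Complex.norm_natCast, Nat.cast_sub hjN]
  rw [hweight]

/-- If `‖∑_{j<N} (N-j) λ^j T^j‖ ≤ C N²` for all `N ≥ 1` and unimodular `λ`, then for `N ≥ 1`
and a unit vector `x` with `T^N x ≠ 0`, `∑_{j<N} 1 / ‖T^j x‖ ≥ √N / (4C)`. -/
theorem stmt_9 {H : Type*} [NormedAddCommGroup H] [InnerProductSpace ℂ H] [CompleteSpace H]
    (T : H →L[ℂ] H) (C : ℝ) (hC : 0 < C)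
    (hT : ∀ N : ℕ, 1 ≤ N → ∀ z : ℂ, ‖z‖ = 1 →
      ‖∑ j ∈ Finset.range N, (((N : ℂ) - (j : ℂ)) * z ^ j) • T ^ j‖ ≤ C * (N : ℝ) ^ 2)
    (N : ℕ) (hN : 1 ≤ N) (x : H) (hx : ‖x‖ = 1) (hTN : (T ^ N) x ≠ 0) :
    Real.sqrt N / (4 * C) ≤ ∑ j ∈ Finset.range N, 1 / ‖(T ^ j) x‖ :=
  stmt_9_general T C hC hT N hN x hx hTN
end

section
/- Let X be a reflexive complex Banach space (i.e., the canonical embedding of X into its double dual is surjective) and let T ∈ B(X) be Kreiss bounded. Then the residual spectrum of T is contained in the open unit disc: every λ ∈ σ_R(T) satisfies |λ| < 1. -/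
/-!
For `‖λ‖ > 1` the operator `λ - T` is invertible. For `‖λ‖ = 1`, suppose `λ - T` is injective
with non-dense range, and take a functional `f ≠ 0` annihilating its range, so `f ∘ T = λ f`.
Approaching `λ` radially, `z = rλ` with `r ↓ 1`, the Kreiss bound makes the vectors
`S_r = (z - λ) (z - T)⁻¹ x` uniformly bounded, while `f (S_r) = f x` and
`(λ - T) S_r = (z - λ) (x - S_r) → 0`. By reflexivity and Banach–Alaoglu in the bidual they have
a weak cluster point `u`, which satisfies `(λ - T) u = 0` and `f u = f x`; choosing `f x ≠ 0`
contradicts injectivity.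
-/

open Filter Topology

theorem ContinuousLinearMap.exists_dual_ne_zero_comp_eq_zero_of_not_denseRange
    {𝕜 E F : Type*} [RCLike 𝕜] [NormedAddCommGroup E] [NormedSpace 𝕜 E]
    [NormedAddCommGroup F] [NormedSpace 𝕜 F] {A : E →L[𝕜] F} (hA : ¬DenseRange A) :
    ∃ f : StrongDual 𝕜 F, f ≠ 0 ∧ f ∘L A = 0 := by
  set R := LinearMap.range (A : E →ₗ[𝕜] F)
  have : IsClosed (R.topologicalClosure : Set F) := R.isClosed_topologicalClosure
  obtain ⟨x, hx⟩ : ∃ x, x ∉ R.topologicalClosure := by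
    contrapose! hA
    rw [DenseRange, ← coe_coe, ← LinearMap.coe_range,
      Submodule.dense_iff_topologicalClosure_eq_top]
    exact eq_top_iff.2 fun x _ => hA x
  obtain ⟨g, hg⟩ := SeparatingDual.exists_ne_zero (R := 𝕜)
    (x := R.topologicalClosure.mkQL x) (by simpa using hx)
  refine ⟨g ∘L R.topologicalClosure.mkQL, fun h => hg (by simpa using congr($h x)), ?_⟩
  ext y
  have : A y ∈ R.topologicalClosure := R.le_topologicalClosure (LinearMap.mem_range_self _ y)
  simp [(Submodule.Quotient.mk_eq_zero _).2 this]

theorem exists_forall_tendsto_dual_apply_eq_of_bounded {𝕜 X ι : Type*} [RCLike 𝕜]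
    [NormedAddCommGroup X] [NormedSpace 𝕜 X]
    (hrefl : Function.Surjective (NormedSpace.inclusionInDoubleDual 𝕜 X))
    {l : Filter ι} [l.NeBot] {S : ι → X} {M : ℝ} (hS : ∀ᶠ i in l, ‖S i‖ ≤ M) :
    ∃ u : X, ∀ (g : StrongDual 𝕜 X) (c : 𝕜),
      Tendsto (fun i => g (S i)) l (𝓝 c) → g u = c := by
  set Φ : ι → WeakDual 𝕜 (StrongDual 𝕜 X) :=
    fun i => StrongDual.toWeakDual (NormedSpace.inclusionInDoubleDual 𝕜 X (S i))
  have hΦ : map Φ l ≤ 𝓟 (WeakDual.toStrongDual ⁻¹' Metric.closedBall 0 M) := by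
    rw [le_principal_iff, mem_map]
    filter_upwards [hS] with i hi
    exact (mem_closedBall_zero_iff (E := StrongDual 𝕜 (StrongDual 𝕜 X))).2
      ((NormedSpace.double_dual_bound 𝕜 X (S i)).trans hi)
  obtain ⟨w, -, hw⟩ := (WeakDual.isCompact_closedBall 0 M).exists_clusterPt hΦ
  obtain ⟨u, hu⟩ := hrefl (WeakDual.toStrongDual w)
  refine ⟨u, fun g c hg => ?_⟩
  have hwg : ClusterPt (w g) (map (fun w' : WeakDual 𝕜 (StrongDual 𝕜 X) => w' g) (map Φ l)) :=
    hw.map (WeakDual.eval_continuous g).continuousAt tendsto_map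
  rw [map_map] at hwg
  calc g u = w g := congr($hu g)
    _ = c := eq_of_nhds_neBot (hwg.mono hg)

theorem ContinuousLinearMap.denseRange_of_injective_of_resolvent_bound {𝕜 X ι : Type*}
    [RCLike 𝕜] [NormedAddCommGroup X] [NormedSpace 𝕜 X]
    (hrefl : Function.Surjective (NormedSpace.inclusionInDoubleDual 𝕜 X))
    {A : X →L[𝕜] X} (hA : Function.Injective A) {l : Filter ι} [l.NeBot] {ε : ι → 𝕜}
    (hε : Tendsto ε l (𝓝 0)) {C : ℝ}
    (hres : ∀ᶠ i in l, IsUnit (A + ε i • 1) ∧ ‖ε i • Ring.inverse (A + ε i • 1)‖ ≤ C) :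
    DenseRange A := by
  by_contra hnd
  obtain ⟨f, hf, hfA⟩ := exists_dual_ne_zero_comp_eq_zero_of_not_denseRange hnd
  obtain ⟨x, hx⟩ : ∃ x, f x ≠ 0 := by simpa [DFunLike.ne_iff] using hf
  have hfA' : ∀ y, f (A y) = 0 := fun y => congr($hfA y)
  set R : ι → X →L[𝕜] X := fun i => Ring.inverse (A + ε i • 1)
  set S : ι → X := fun i => ε i • R i x
  have hinv : ∀ᶠ i in l, A (S i) = ε i • (x - S i) ∧ f (S i) = f x := by
    filter_upwards [hres] with i hi
    have hRx : A (R i x) + ε i • R i x = x := by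
      simpa using congr($(Ring.mul_inverse_cancel _ hi.1) x)
    have hfRx : ε i * f (R i x) = f x := by
      simpa [hfA'] using congr_arg f hRx
    constructor
    · simp only [S, map_smul, eq_sub_of_add_eq hRx]
    · simp [S, hfRx]
  have hAS : Tendsto (fun i => A (S i)) l (𝓝 0) := by
    apply squeeze_zero_norm' (a := fun i => ‖ε i‖ * ((1 + C) * ‖x‖))
    · filter_upwards [hinv, hres] with i hi hCi
      rw [hi.1, norm_smul]
      gcongr
      calc ‖x - S i‖ ≤ ‖x‖ + ‖S i‖ := norm_sub_le _ _
        _ ≤ ‖x‖ + C * ‖x‖ := by gcongr; exact ContinuousLinearMap.le_of_opNorm_le _ hCi.2 x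
        _ = (1 + C) * ‖x‖ := by ring
    · simpa using (hε.norm).mul_const ((1 + C) * ‖x‖)
  obtain ⟨u, hu⟩ := exists_forall_tendsto_dual_apply_eq_of_bounded hrefl
    (S := S) (M := C * ‖x‖) (by
      filter_upwards [hres] with i hCi
      exact ContinuousLinearMap.le_of_opNorm_le _ hCi.2 x)
  have hAu : A u = 0 := SeparatingDual.eq_zero_of_forall_dual_eq_zero (R := 𝕜) fun g =>
    hu (g ∘L A) 0 (by simpa [Function.comp_def] using (g.continuous.tendsto 0).comp hAS)
  have hfu : f u = f x :=
    hu f (f x) (tendsto_const_nhds.congr' (hinv.mono fun i hi => hi.2.symm))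
  exact hx (by rw [← hfu, hA (hAu.trans (map_zero A).symm), map_zero])

theorem stmt_12_general {X : Type*} [NormedAddCommGroup X] [NormedSpace ℂ X]
    (hrefl : Function.Surjective (NormedSpace.inclusionInDoubleDual ℂ X))
    (T : X →L[ℂ] X)
    (hKreiss : ∃ C > 0, ∀ z : ℂ, 1 < ‖z‖ →
      IsUnit (z • (1 : X →L[ℂ] X) - T) ∧
      ‖Ring.inverse (z • (1 : X →L[ℂ] X) - T)‖ ≤ C / (‖z‖ - 1)) :
    ∀ lam : ℂ, Function.Injective ⇑(lam • (1 : X →L[ℂ] X) - T) →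
      ¬DenseRange ⇑(lam • (1 : X →L[ℂ] X) - T) → ‖lam‖ < 1 := by
  obtain ⟨C, -, hK⟩ := hKreiss
  intro lam hinj hnd
  by_contra! hlam
  rcases hlam.lt_or_eq with hlam | hlam
  · exact hnd ((Module.End.isUnit_iff _).1
      ((hK lam hlam).1.map ContinuousLinearMap.toLinearMapRingHom)).2.denseRange
  refine hnd (ContinuousLinearMap.denseRange_of_injective_of_resolvent_bound hrefl hinj
    (l := 𝓝[>] (1 : ℝ)) (ε := fun r => ((r - 1 : ℝ) : ℂ) * lam) (C := C) ?_ ?_)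
  · exact tendsto_nhdsWithin_of_tendsto_nhds
      ((by fun_prop : Continuous fun r : ℝ => ((r - 1 : ℝ) : ℂ) * lam).tendsto' 1 0 (by simp))
  filter_upwards [self_mem_nhdsWithin] with r (hr : 1 < r)
  have hz : ‖(r : ℂ) * lam‖ = r := by
    rw [norm_mul, ← hlam, mul_one, Complex.norm_real, Real.norm_of_nonneg (by linarith)]
  have hshift : lam • (1 : X →L[ℂ] X) - T + (((r - 1 : ℝ) : ℂ) * lam) • 1 =
      ((r : ℂ) * lam) • 1 - T := by
    push_cast; module
  obtain ⟨hunit, hbound⟩ := hK _ (hz ▸ hr)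
  rw [hz] at hbound
  rw [hshift]
  refine ⟨hunit, ?_⟩
  rw [norm_smul, norm_mul, ← hlam, mul_one, Complex.norm_real, Real.norm_of_nonneg (by linarith)]
  calc (r - 1) * _ ≤ (r - 1) * (C / (r - 1)) := by gcongr
    _ = C := mul_div_cancel₀ _ (by linarith)

/-- If `X` is a reflexive complex Banach space and `T` is Kreiss bounded, then the residual
spectrum of `T` is contained in the open unit disc: whenever `λ I - T` is injective with
non-dense range, `|λ| < 1`. -/
theorem stmt_12 {X : Type*} [NormedAddCommGroup X] [NormedSpace ℂ X] [CompleteSpace X]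
    (hrefl : Function.Surjective (NormedSpace.inclusionInDoubleDual ℂ X))
    (T : X →L[ℂ] X)
    (hKreiss : ∃ C > 0, ∀ z : ℂ, 1 < ‖z‖ →
      IsUnit (z • (1 : X →L[ℂ] X) - T) ∧
      ‖Ring.inverse (z • (1 : X →L[ℂ] X) - T)‖ ≤ C / (‖z‖ - 1)) :
    ∀ lam : ℂ, Function.Injective ⇑(lam • (1 : X →L[ℂ] X) - T) →
      ¬DenseRange ⇑(lam • (1 : X →L[ℂ] X) - T) → ‖lam‖ < 1 :=
  stmt_12_general hrefl T hKreiss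
end

section
/- There exists a bounded operator T on the complex Hilbert space ℓ²(ℕ) that is Cesàro bounded, mean ergodic, and satisfies ker(I + T) ≠ {0} and ker(I + T*) = {0}, where T* denotes the Hilbert-space adjoint of T. -/
/-!
Take `T = D + ⟪b, ·⟫ e₀` on `ℓ²(ℕ, ℂ)`, where `D` is diagonal with entries `λₘ = 1/m - 1 ∈ [-1, 0]`
and `bₘ = 1/m`. Since `λ₀ = -1` and `b₀ = 0`, `e₀` is an eigenvector of `T` for `-1`. On the other
hand `T* y = -y` reads `bₘ (yₘ + y₀) = 0`, so `yₘ = -y₀` for all `m ≥ 1`, which is square summable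
only when `y = 0`.

Because `D e₀ = -e₀` and `b ⟂ e₀`, the powers are `T^k x = D^k x + ⟪g k, x⟫ e₀` with
`g k m = λₘ^k - (-1)^k`. The partial sums `G n = ∑_{k<n} g k` are bounded coordinatewise by `4`
(difference of two alternating geometric sums) and by `n²/m`, hence `‖G n‖ = O(n)`; together with
`‖∑ D^k‖ ≤ 2` this makes `T` Cesàro bounded. The Cesàro means of every basis vector are `O(1/n)`,
and Cesàro boundedness propagates this convergence to `0` from the basis vectors to all of `ℓ²`.
-/

open Filter Finset Topology
open scoped ENNReal ComplexConjugate InnerProductSpace lp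

theorem abs_geom_sum_le_two {t : ℝ} (h₀ : -1 ≤ t) (h₁ : t ≤ 0) (n : ℕ) :
    |∑ k ∈ range n, t ^ k| ≤ 2 := by
  have hpow : |t ^ n| ≤ 1 := by
    rw [abs_pow]; exact pow_le_one₀ (abs_nonneg t) (abs_le.2 ⟨h₀, by linarith⟩)
  rw [geom_sum_eq (by linarith), abs_div, div_le_iff₀ (by rw [abs_pos]; linarith)]
  calc |t ^ n - 1| ≤ |t ^ n| + |1| := abs_sub _ _
    _ ≤ 2 * 1 := by rw [abs_one]; linarith
    _ ≤ 2 * |t - 1| := by gcongr; rw [abs_of_neg (by linarith)]; linarith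

theorem abs_pow_sub_neg_one_pow_le {t : ℝ} (h₀ : -1 ≤ t) (h₁ : t ≤ 0) (k : ℕ) :
    |t ^ k - (-1) ^ k| ≤ k * (t + 1) := by
  have hmax : max |t| |(-1 : ℝ)| = 1 := by
    rw [abs_neg, abs_one, max_eq_right (abs_le.2 ⟨h₀, by linarith⟩)]
  calc |t ^ k - (-1) ^ k| ≤ |t - -1| * k * max |t| |(-1 : ℝ)| ^ (k - 1) := abs_pow_sub_pow_le ..
    _ = k * (t + 1) := by
        rw [hmax, one_pow, mul_one, sub_neg_eq_add, abs_of_nonneg (by linarith), mul_comm]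

theorem Memℓp.infty_mul_left {ι 𝕜 : Type*} [NormedField 𝕜] {p : ℝ≥0∞} {d x : ι → 𝕜}
    (hd : Memℓp d ∞) (hx : Memℓp x p) : Memℓp (fun i => d i * x i) p := by
  obtain ⟨C, hC⟩ := hd.bddAbove
  refine (hx.norm.const_mul C).mono fun i => ?_
  rw [norm_mul]
  exact mul_le_mul_of_nonneg_right (hC ⟨i, rfl⟩) (norm_nonneg _)

namespace lp

section diagonal

variable {ι 𝕜 : Type*} [RCLike 𝕜] {p : ℝ≥0∞} [Fact (1 ≤ p)]

theorem norm_le_mul_norm_of_forall {x y : lp (fun _ : ι => 𝕜) p} {C : ℝ} (hC : 0 ≤ C)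
    (h : ∀ i, ‖y i‖ ≤ C * ‖x i‖) : ‖y‖ ≤ C * ‖x‖ :=
  calc ‖y‖ ≤ ‖(C : 𝕜) • x‖ := by
        refine lp.norm_mono (zero_lt_one.trans_le Fact.out).ne' fun i => ?_
        rw [lp.coeFn_smul, Pi.smul_apply, norm_smul, RCLike.norm_ofReal, abs_of_nonneg hC]
        exact h i
    _ = C * ‖x‖ := by rw [norm_smul, RCLike.norm_ofReal, abs_of_nonneg hC]

noncomputable def diagonal (d : lp (fun _ : ι => 𝕜) ∞) :
    lp (fun _ : ι => 𝕜) p →L[𝕜] lp (fun _ : ι => 𝕜) p :=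
  LinearMap.mkContinuous
    { toFun x := ⟨fun i => d i * x i, (lp.memℓp d).infty_mul_left (lp.memℓp x)⟩
      map_add' x y := by ext i; simp only [coeFn_add]; simp [mul_add]
      map_smul' c x := by ext i; simp [mul_left_comm] }
    ‖d‖ fun x => norm_le_mul_norm_of_forall (norm_nonneg d) fun i => by
      simp only [LinearMap.coe_mk, AddHom.coe_mk, norm_mul]
      exact mul_le_mul_of_nonneg_right (norm_apply_le_norm ENNReal.top_ne_zero d i) (norm_nonneg _)

@[simp] theorem diagonal_apply (d : lp (fun _ : ι => 𝕜) ∞) (x : lp (fun _ : ι => 𝕜) p) (i : ι) :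
    diagonal d x i = d i * x i := rfl

theorem diagonal_pow_apply (d : lp (fun _ : ι => 𝕜) ∞) (k : ℕ) (x : lp (fun _ : ι => 𝕜) p)
    (i : ι) : (diagonal d ^ k) x i = d i ^ k * x i := by
  induction k generalizing x with
  | zero => simp
  | succ k ih => rw [pow_succ, mul_apply_eq_comp, ih, diagonal_apply, pow_succ, mul_assoc]

theorem isSelfAdjoint_diagonal {d : lp (fun _ : ι => 𝕜) ∞} (hd : IsSelfAdjoint d) :
    IsSelfAdjoint (diagonal (p := 2) d) := by
  refine ContinuousLinearMap.isSelfAdjoint_iff_isSymmetric.2 fun x y => ?_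
  simp only [ContinuousLinearMap.coe_coe, lp.inner_eq_tsum, diagonal_apply]
  refine tsum_congr fun i => ?_
  have hi : conj (d i) = d i := by simpa using congrArg (· i) hd.star_eq
  simp only [RCLike.inner_apply, map_mul, hi]
  ring

end diagonal

theorem norm_sq_eq_tsum {ι E : Type*} [NormedAddCommGroup E] (y : lp (fun _ : ι => E) 2) :
    ‖y‖ ^ 2 = ∑' i, ‖y i‖ ^ 2 := by
  simpa [Real.rpow_two] using lp.norm_rpow_eq_tsum (by norm_num) y

theorem norm_sq_le_of_le_div {E : Type*} [NormedAddCommGroup E] {y : lp (fun _ : ℕ => E) 2}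
    {A : ℝ} {K : ℕ} (hA : ∀ m, ‖y m‖ ≤ A) (hK : ∀ m, K < m → ‖y m‖ ≤ K / m) :
    ‖y‖ ^ 2 ≤ A ^ 2 * (K + 1) + 2 * K := by
  rw [norm_sq_eq_tsum]
  refine Real.tsum_le_of_sum_le (fun _ => by positivity) fun s => ?_
  obtain ⟨N, hN⟩ := s.exists_nat_subset_range
  have head : ∑ m ∈ range (K + 1), ‖y m‖ ^ 2 ≤ A ^ 2 * (K + 1) := by
    refine (sum_le_card_nsmul _ _ _ fun m _ => pow_le_pow_left₀ (norm_nonneg _) (hA m) 2).trans ?_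
    rw [card_range, nsmul_eq_mul, mul_comm]
    push_cast; rfl
  have tail : ∑ m ∈ Ioo K (max N (K + 1)), ‖y m‖ ^ 2 ≤ 2 * K := by
    calc ∑ m ∈ Ioo K (max N (K + 1)), ‖y m‖ ^ 2
        ≤ ∑ m ∈ Ioo K (max N (K + 1)), (K : ℝ) ^ 2 * ((m : ℝ) ^ 2)⁻¹ := by
          refine sum_le_sum fun m hm => ?_
          rw [← div_eq_mul_inv, ← div_pow]
          exact pow_le_pow_left₀ (norm_nonneg _) (hK m (mem_Ioo.1 hm).1) 2
      _ ≤ (K : ℝ) ^ 2 * (2 / (K + 1)) := by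
          rw [← mul_sum]
          exact mul_le_mul_of_nonneg_left (sum_Ioo_inv_sq_le _ _) (by positivity)
      _ ≤ 2 * K := by
          rw [mul_div_assoc', div_le_iff₀ (by positivity)]
          nlinarith
  calc ∑ m ∈ s, ‖y m‖ ^ 2 ≤ ∑ m ∈ range (max N (K + 1)), ‖y m‖ ^ 2 :=
        sum_le_sum_of_subset_of_nonneg (hN.trans (range_subset_range.2 (le_max_left _ _)))
          fun _ _ _ => by positivity
    _ = ∑ m ∈ range (K + 1), ‖y m‖ ^ 2 + ∑ m ∈ Ioo K (max N (K + 1)), ‖y m‖ ^ 2 := by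
        rw [← Ico_add_one_left_eq_Ioo, sum_range_add_sum_Ico _ (le_max_right _ _)]
    _ ≤ A ^ 2 * (K + 1) + 2 * K := add_le_add head tail

theorem tendsto_apply_of_forall_single {ι κ 𝕜 F : Type*} [DecidableEq ι]
    [NontriviallyNormedField 𝕜] {E : ι → Type*} [∀ i, NormedAddCommGroup (E i)]
    [∀ i, NormedSpace 𝕜 (E i)] [NormedAddCommGroup F] [NormedSpace 𝕜 F] {p : ℝ≥0∞}
    [Fact (1 ≤ p)] (hp : p ≠ ∞) {l : Filter κ} {A : κ → lp E p →L[𝕜] F} (hA : ∃ C, ∀ n, ‖A n‖ ≤ C)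
    (hsingle : ∀ i (c : E i), Tendsto (fun n => A n (lp.single p i c)) l (𝓝 0))
    (x : lp E p) : Tendsto (fun n => A n x) l (𝓝 0) := by
  have hequi : Equicontinuous fun n => (A n : lp E p → F) :=
    (NormedSpace.equicontinuous_TFAE A).out 5 1 |>.1 hA
  refine (hequi.isClosed_setOfPred_tendsto continuous_const).mem_of_tendsto
    (lp.hasSum_single hp x) (Eventually.of_forall fun s => ?_)
  simpa only [map_sum, Set.mem_ofPred_eq, sum_const_zero] using
    tendsto_finsetSum s fun i _ => hsingle i (x i)

end lp

noncomputable def cesaroMean {𝕜 E : Type*} [NormedField 𝕜] [NormedAddCommGroup E]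
    [NormedSpace 𝕜 E] (A : E →L[𝕜] E) (n : ℕ) : E →L[𝕜] E :=
  ((n : 𝕜) + 1)⁻¹ • ∑ k ∈ range (n + 1), A ^ k

namespace CesaroCounterexample

noncomputable section

/-- As `(0 : ℝ)⁻¹ = 0`, `lam 0 = -1` and `b 0 = 0`: this makes `e₀` an eigenvector of `T`. -/
def lam (m : ℕ) : ℝ := (m : ℝ)⁻¹ - 1

theorem neg_one_le_lam (m : ℕ) : -1 ≤ lam m := by
  simp only [lam]; linarith [inv_nonneg.2 (Nat.cast_nonneg (α := ℝ) m)]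

theorem lam_nonpos (m : ℕ) : lam m ≤ 0 := by
  simp only [lam, sub_nonpos]; exact Nat.cast_inv_le_one m

theorem lam_add_one (m : ℕ) : lam m + 1 = (m : ℝ)⁻¹ := by simp [lam]

theorem abs_sum_pow_sub_le_four (m n : ℕ) :
    |∑ k ∈ range n, (lam m ^ k - (-1) ^ k)| ≤ 4 := by
  rw [sum_sub_distrib]
  have h₁ := abs_geom_sum_le_two (neg_one_le_lam m) (lam_nonpos m) n
  have h₂ := abs_geom_sum_le_two le_rfl (by norm_num : (-1 : ℝ) ≤ 0) n
  linarith [abs_sub (∑ k ∈ range n, lam m ^ k) (∑ k ∈ range n, (-1 : ℝ) ^ k)]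

theorem abs_sum_pow_sub_le_sq_div (m n : ℕ) :
    |∑ k ∈ range n, (lam m ^ k - (-1) ^ k)| ≤ n ^ 2 / m := by
  calc |∑ k ∈ range n, (lam m ^ k - (-1) ^ k)|
      ≤ ∑ k ∈ range n, |lam m ^ k - (-1) ^ k| := abs_sum_le_sum_abs _ _
    _ ≤ ∑ _k ∈ range n, (n : ℝ) * (m : ℝ)⁻¹ := by
        refine sum_le_sum fun k hk => ?_
        rw [← lam_add_one]
        refine (abs_pow_sub_neg_one_pow_le (neg_one_le_lam m) (lam_nonpos m) k).trans ?_
        gcongr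
        · linarith [neg_one_le_lam m]
        · exact (mem_range.1 hk).le
    _ = n ^ 2 / m := by rw [sum_const, card_range, nsmul_eq_mul]; ring

def diagSeq : ℓ^∞(ℕ, ℂ) := ⟨fun m => (lam m : ℂ), memℓp_infty ⟨1, by
  rintro _ ⟨m, rfl⟩
  dsimp only
  rw [Complex.norm_real, Real.norm_eq_abs, abs_le]
  exact ⟨neg_one_le_lam m, (lam_nonpos m).trans zero_le_one⟩⟩⟩

def D : ℓ²(ℕ, ℂ) →L[ℂ] ℓ²(ℕ, ℂ) := lp.diagonal diagSeq

def b : ℓ²(ℕ, ℂ) := ⟨fun m => Complex.ofReal (m : ℝ)⁻¹, by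
  refine memℓp_gen ((Real.summable_one_div_nat_pow.2 one_lt_two).congr fun m => ?_)
  simp⟩

def e₀ : ℓ²(ℕ, ℂ) := lp.single 2 0 1

def T : ℓ²(ℕ, ℂ) →L[ℂ] ℓ²(ℕ, ℂ) := D + (innerSL ℂ b).smulRight e₀

/-- Read off from `T (D^k x + c • e₀) = D^(k+1) x + (⟪D^k b, x⟫ - c) • e₀`. -/
def g : ℕ → ℓ²(ℕ, ℂ)
  | 0 => 0
  | k + 1 => (D ^ k) b - g k

def G (n : ℕ) : ℓ²(ℕ, ℂ) := ∑ k ∈ range n, g k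

theorem D_pow_apply (k : ℕ) (x : ℓ²(ℕ, ℂ)) (m : ℕ) : (D ^ k) x m = (lam m : ℂ) ^ k * x m :=
  lp.diagonal_pow_apply _ k x m

theorem isSelfAdjoint_D : IsSelfAdjoint D :=
  lp.isSelfAdjoint_diagonal <| by ext m; exact Complex.conj_ofReal _

theorem e₀_ne_zero : e₀ ≠ 0 := by
  intro h
  simpa [e₀] using congrArg (fun x : ℓ²(ℕ, ℂ) => x 0) h

theorem D_e₀ : D e₀ = -e₀ := by
  ext m
  rcases eq_or_ne m 0 with rfl | hm
  · simp [D, e₀, diagSeq, lam]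
  · simp [D, e₀, hm]

theorem inner_b_e₀ : ⟪b, e₀⟫_ℂ = 0 := by
  simp [e₀, lp.inner_single_right, b]

theorem T_apply (x : ℓ²(ℕ, ℂ)) : T x = D x + ⟪b, x⟫_ℂ • e₀ := rfl

theorem T_e₀ : T e₀ = -e₀ := by
  rw [T_apply, D_e₀, inner_b_e₀, zero_smul, add_zero]

theorem T_pow_apply (k : ℕ) (x : ℓ²(ℕ, ℂ)) : (T ^ k) x = (D ^ k) x + ⟪g k, x⟫_ℂ • e₀ := by
  induction k with
  | zero => simp [g]
  | succ k ih =>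
    have hb : ⟪b, (D ^ k) x⟫_ℂ = ⟪(D ^ k) b, x⟫_ℂ :=
      ((isSelfAdjoint_D.pow k).isSymmetric b x).symm
    rw [pow_succ', mul_apply_eq_comp, ih, T_apply, map_add, map_smul, D_e₀, inner_add_right,
      inner_smul_right, inner_b_e₀, hb, pow_succ', mul_apply_eq_comp, g, inner_sub_left]
    module

theorem g_apply (k m : ℕ) : g k m = ((lam m ^ k - (-1) ^ k : ℝ) : ℂ) := by
  induction k with
  | zero => simp [g]
  | succ k ih =>
    rw [g, lp.coeFn_sub, Pi.sub_apply, ih, D_pow_apply]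
    have hb : b m = ((lam m + 1 : ℝ) : ℂ) := by rw [lam_add_one]; rfl
    rw [hb]
    push_cast
    ring

theorem G_apply (n m : ℕ) : G n m = ((∑ k ∈ range n, (lam m ^ k - (-1) ^ k) : ℝ) : ℂ) := by
  simp only [G, lp.coeFn_sum, Finset.sum_apply, g_apply]
  push_cast
  rfl

theorem norm_e₀ : ‖e₀‖ = 1 := by
  simp [e₀, lp.norm_single]

theorem sum_T_pow (n : ℕ) :
    ∑ k ∈ range n, T ^ k = ∑ k ∈ range n, D ^ k + (innerSL ℂ (G n)).smulRight e₀ := by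
  ext1 x
  simp only [add_apply, _root_.sum_apply, T_pow_apply, sum_add_distrib,
    ContinuousLinearMap.smulRight_apply, innerSL_apply_apply, G, sum_inner, sum_smul]

theorem norm_sum_D_pow_le (n : ℕ) : ‖∑ k ∈ range n, D ^ k‖ ≤ 2 := by
  refine ContinuousLinearMap.opNorm_le_bound _ zero_le_two fun x =>
    lp.norm_le_mul_norm_of_forall zero_le_two fun m => ?_
  rw [_root_.sum_apply, lp.coeFn_sum, Finset.sum_apply]
  simp only [D_pow_apply, ← sum_mul, norm_mul]
  gcongr
  exact_mod_cast (Complex.norm_real _).trans_le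
    (abs_geom_sum_le_two (neg_one_le_lam m) (lam_nonpos m) n)

theorem norm_G_le (n : ℕ) : ‖G n‖ ≤ 5 * (n + 1) := by
  have hsq := lp.norm_sq_le_of_le_div (y := G n) (A := 4) (K := n ^ 2)
    (fun m => by rw [G_apply, Complex.norm_real]; exact abs_sum_pow_sub_le_four m n)
    (fun m _ => by
      rw [G_apply, Complex.norm_real]
      exact_mod_cast abs_sum_pow_sub_le_sq_div m n)
  refine abs_le_of_sq_le_sq' ?_ (by positivity) |>.2
  push_cast at hsq
  nlinarith [Nat.cast_nonneg (α := ℝ) n]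

theorem norm_sum_T_pow_le (n : ℕ) : ‖∑ k ∈ range n, T ^ k‖ ≤ 2 + 5 * (n + 1) := by
  rw [sum_T_pow]
  refine (norm_add_le _ _).trans (add_le_add (norm_sum_D_pow_le n) ?_)
  rw [ContinuousLinearMap.norm_smulRight_apply, innerSL_apply_norm, norm_e₀, mul_one]
  exact norm_G_le n

theorem norm_sum_T_pow_single_le (n i : ℕ) (c : ℂ) :
    ‖(∑ k ∈ range n, T ^ k) (lp.single 2 i c)‖ ≤ 6 * ‖c‖ := by
  have hD : ‖(∑ k ∈ range n, D ^ k) (lp.single 2 i c)‖ ≤ 2 * ‖c‖ := by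
    refine ((∑ k ∈ range n, D ^ k).le_opNorm _).trans ?_
    rw [lp.norm_single (by norm_num)]
    exact mul_le_mul_of_nonneg_right (norm_sum_D_pow_le n) (norm_nonneg c)
  have hG : ‖⟪G n, lp.single 2 i c⟫_ℂ‖ ≤ 4 * ‖c‖ := by
    rw [lp.inner_single_right]
    refine (norm_inner_le_norm _ _).trans (mul_le_mul_of_nonneg_right ?_ (norm_nonneg c))
    rw [G_apply, Complex.norm_real]
    exact abs_sum_pow_sub_le_four i n
  rw [sum_T_pow, add_apply, ContinuousLinearMap.smulRight_apply, innerSL_apply_apply]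
  refine (norm_add_le _ _).trans ?_
  rw [norm_smul, norm_e₀, mul_one]
  linarith

theorem norm_inv_natCast_add_one (n : ℕ) : ‖((n : ℂ) + 1)⁻¹‖ = ((n : ℝ) + 1)⁻¹ := by
  rw [norm_inv]; norm_cast

theorem norm_cesaroMean_T_le (n : ℕ) : ‖cesaroMean T n‖ ≤ 12 := by
  rw [cesaroMean, norm_smul, norm_inv_natCast_add_one, inv_mul_le_iff₀ (by positivity)]
  refine (norm_sum_T_pow_le (n + 1)).trans ?_
  push_cast
  nlinarith [Nat.cast_nonneg (α := ℝ) n]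

theorem tendsto_cesaroMean_T (x : ℓ²(ℕ, ℂ)) :
    Tendsto (fun n => cesaroMean T n x) atTop (𝓝 0) := by
  refine lp.tendsto_apply_of_forall_single ENNReal.ofNat_ne_top ⟨12, norm_cesaroMean_T_le⟩
    (fun i c => ?_) x
  refine squeeze_zero_norm (fun n => ?_)
    (by simpa using tendsto_one_div_add_atTop_nhds_zero_nat.const_mul (6 * ‖c‖))
  rw [cesaroMean, smul_apply, norm_smul, norm_inv_natCast_add_one, mul_comm]
  exact mul_le_mul_of_nonneg_right (norm_sum_T_pow_single_le (n + 1) i c) (by positivity)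

theorem T_single (m : ℕ) :
    T (lp.single 2 m 1) = (lam m : ℂ) • lp.single 2 m 1 + ((m : ℝ)⁻¹ : ℂ) • e₀ := by
  have hD : D (lp.single 2 m 1) = (lam m : ℂ) • lp.single 2 m 1 := by
    ext j
    rw [lp.coeFn_smul, Pi.smul_apply, D, lp.diagonal_apply, smul_eq_mul]
    rcases eq_or_ne j m with rfl | hj
    · rfl
    · rw [lp.single_apply_ne 2 m _ hj, mul_zero, mul_zero]
  rw [T_apply, hD, lp.inner_single_right]
  simp [b]

theorem eq_zero_of_adjoint_T_apply_eq_neg {y : ℓ²(ℕ, ℂ)}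
    (hy : ContinuousLinearMap.adjoint T y = -y) : y = 0 := by
  have hcoord : ∀ m : ℕ, ((m : ℝ)⁻¹ : ℂ) * (y m + y 0) = 0 := by
    intro m
    have h := ContinuousLinearMap.adjoint_inner_left T (lp.single 2 m 1) y
    rw [hy, T_single, inner_neg_left, inner_add_right, inner_smul_right, inner_smul_right, e₀,
      lp.inner_single_right, lp.inner_single_right] at h
    have h' := congrArg conj h
    simp only [RCLike.inner_apply, one_mul, map_neg, map_add, map_mul, Complex.conj_conj,
      Complex.conj_ofReal, map_inv₀] at h'
    simp only [lam, Complex.ofReal_sub, Complex.ofReal_inv, Complex.ofReal_natCast,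
      Complex.ofReal_one] at h' ⊢
    linear_combination -h'
  have hconst : ∀ m, m ≠ 0 → y m = -y 0 := fun m hm =>
    eq_neg_of_add_eq_zero_left <| (mul_eq_zero.1 (hcoord m)).resolve_left (by simpa using hm)
  have hy0 : y 0 = 0 := by
    have hlim : Tendsto (fun m => ‖y m‖ ^ 2) atTop (𝓝 0) := by
      simpa [Real.rpow_two] using ((lp.memℓp y).summable (by norm_num)).tendsto_atTop_zero
    have hev : (fun m => ‖y m‖ ^ 2) =ᶠ[atTop] fun _ => ‖y 0‖ ^ 2 :=
      (eventually_ne_atTop 0).mono fun m hm => by simp only [hconst m hm, norm_neg]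
    exact norm_eq_zero.1 <| pow_eq_zero_iff two_ne_zero |>.1
      (tendsto_nhds_unique (hlim.congr' hev) tendsto_const_nhds).symm
  ext m
  rcases eq_or_ne m 0 with rfl | hm
  · exact hy0
  · rw [hconst m hm, hy0, neg_zero, lp.coeFn_zero, Pi.zero_apply]

end

end CesaroCounterexample

/-- There is a bounded operator `T` on `ℓ²(ℕ)` which is Cesàro bounded, mean ergodic, with
`ker (I + T) ≠ {0}` and `ker (I + T*) = {0}`. -/
theorem stmt_13 :
    ∃ T : (lp (fun _ : ℕ => ℂ) 2) →L[ℂ] (lp (fun _ : ℕ => ℂ) 2),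
      (∃ C : ℝ, ∀ n : ℕ, ‖((n : ℂ) + 1)⁻¹ • ∑ k ∈ Finset.range (n + 1), T ^ k‖ ≤ C) ∧
      (∀ x : lp (fun _ : ℕ => ℂ) 2, ∃ y : lp (fun _ : ℕ => ℂ) 2,
        Tendsto (fun n : ℕ => ((n : ℂ) + 1)⁻¹ • ∑ k ∈ Finset.range (n + 1), (T ^ k) x)
          atTop (nhds y)) ∧
      (∃ x : lp (fun _ : ℕ => ℂ) 2, x ≠ 0 ∧ T x = -x) ∧
      (∀ y : lp (fun _ : ℕ => ℂ) 2, (ContinuousLinearMap.adjoint T) y = -y → y = 0) := by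
  open CesaroCounterexample in
  exact ⟨T, ⟨12, norm_cesaroMean_T_le⟩,
    fun x => ⟨0, by simpa only [cesaroMean, smul_apply, _root_.sum_apply] using
      tendsto_cesaroMean_T x⟩,
    ⟨e₀, e₀_ne_zero, T_e₀⟩, fun _ => eq_zero_of_adjoint_T_apply_eq_neg⟩
end

section
/- There exist a bounded operator T on the complex Hilbert space ℓ²(ℕ) and a complex number λ with |λ| = 1 such that T is mean ergodic and λ ∈ σ_R(T); in other words, there is a mean ergodic Hilbert space operator whose residual spectrum meets the unit circle. -/
/-!
Take `T = -S` and `λ = -1`, where `(S z)ₘ = cₘ z₀ + (1 - cₘ) zₘ` with `cₘ = 4⁻ᵐ`: every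
coordinate is pulled towards the head coordinate `z₀`, which `S` fixes. Then
`(λ - T) z = (S - 1) z = (cₘ (z₀ - zₘ))ₘ`. Its range lies in the closed hyperplane `z₀ = 0`, and
its kernel consists of constant sequences, of which only `0` is square summable.

For mean ergodicity, `1 - T = 1 + S` is invertible, so `∑_{k ≤ n} Tᵏ = (1 - Tⁿ⁺¹)(1 - T)⁻¹` and
the Cesàro means tend to `0` as soon as `‖Tⁿ‖ = o(n)`. Now `Sᵏ z = z₀ (1 - (1 - c)ᵏ) + (1 - c)ᵏ z`,
and `0 ≤ 1 - (1 - cₘ)ᵏ ≤ min (1, k cₘ) ≤ √k 2⁻ᵐ`, so `‖Sᵏ‖ ≤ 1 + C √k`. `T` is not power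
bounded, which is unavoidable: a power bounded operator on a reflexive space is mean ergodic
together with `-T`, and then `-1` cannot lie in the residual spectrum of `T`.
-/

open Filter Topology Asymptotics Finset
open scoped lp ENNReal

noncomputable section

theorem tendsto_cesaro_zero_of_isUnit_one_sub {𝕜 A : Type*} [RCLike 𝕜] [NormedRing A]
    [NormedSpace 𝕜 A] {a : A} (hu : IsUnit (1 - a))
    (ha : (fun n : ℕ => a ^ n) =o[atTop] (fun n => (n : ℝ))) :
    Tendsto (fun n : ℕ => ((n : 𝕜) + 1)⁻¹ • ∑ k ∈ range (n + 1), a ^ k) atTop (𝓝 0) := by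
  obtain ⟨u, hu⟩ := hu
  have hsum (n : ℕ) : ∑ k ∈ range (n + 1), a ^ k = (1 - a ^ (n + 1)) * ↑u⁻¹ := by
    rw [← geom_sum_mul_neg, ← hu, Units.mul_inv_cancel_right]
  have hnorm (n : ℕ) : ‖(n : 𝕜) + 1‖ = ((n + 1 : ℕ) : ℝ) := by
    exact_mod_cast RCLike.norm_natCast (K := 𝕜) (n + 1)
  have hpow : (fun n : ℕ => a ^ (n + 1)) =o[atTop] (fun n => (n : 𝕜) + 1) := by
    refine isLittleO_norm_right.1 ?_
    simpa only [hnorm, Function.comp_def] using ha.comp_tendsto (tendsto_add_atTop_nat 1)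
  have hone : (fun _ : ℕ => (1 : A)) =o[atTop] (fun n => (n : 𝕜) + 1) := by
    refine isLittleO_const_left.2 (Or.inr ?_)
    simpa only [Function.comp_def, hnorm] using
      tendsto_natCast_atTop_atTop.comp (tendsto_add_atTop_nat 1)
  refine IsLittleO.tendsto_inv_smul_nhds_zero ?_
  simpa only [hsum, mul_one] using
    (hone.sub hpow).mul_isBigO (isBigO_const_const (↑u⁻¹ : A) (one_ne_zero (α := 𝕜)) atTop)

lemma isLittleO_sqrt_natCast : (fun n : ℕ => √(n : ℝ)) =o[atTop] (fun n => (n : ℝ)) := by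
  have hsqrt : Tendsto (fun n : ℕ => √(n : ℝ)) atTop atTop :=
    Real.tendsto_sqrt_atTop.comp tendsto_natCast_atTop_atTop
  have hone : (fun _ : ℕ => (1 : ℝ)) =o[atTop] (fun n => √(n : ℝ)) :=
    isLittleO_const_left.2 (Or.inr (by simpa [Function.comp_def, abs_of_nonneg] using hsqrt))
  simpa [Real.mul_self_sqrt (Nat.cast_nonneg _)] using
    hone.mul_isBigO (isBigO_refl (fun n : ℕ => √(n : ℝ)) atTop)

lemma norm_neg_pow {R : Type*} [SeminormedRing R] (a : R) (n : ℕ) : ‖(-a) ^ n‖ = ‖a ^ n‖ := by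
  rcases n.even_or_odd with h | h
  · rw [h.neg_pow]
  · rw [h.neg_pow, norm_neg]

section Diagonal

variable {α 𝕜 : Type*} [NontriviallyNormedField 𝕜] {p : ℝ≥0∞} [Fact (1 ≤ p)]

def diagonalContraction (a : α → 𝕜) (ha : ∀ i, ‖a i‖ ≤ 1) :
    lp (fun _ : α => 𝕜) p →L[𝕜] lp (fun _ : α => 𝕜) p :=
  have hle (f : lp (fun _ : α => 𝕜) p) (i : α) : ‖a i * f i‖ ≤ ‖f i‖ := by
    rw [norm_mul]; exact mul_le_of_le_one_left (norm_nonneg _) (ha i)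
  LinearMap.mkContinuous
    { toFun := fun f => ⟨fun i => a i * f i, (lp.memℓp f).mono' (hle f)⟩
      map_add' := fun f g => by ext i; simp [mul_add]; rfl
      map_smul' := fun c f => by ext i; simp [mul_left_comm] } 1
    fun f => by
      rw [one_mul]
      exact lp.norm_mono (zero_lt_one.trans_le Fact.out).ne' (hle f)

@[simp]
lemma diagonalContraction_apply (a : α → 𝕜) (ha : ∀ i, ‖a i‖ ≤ 1)
    (f : lp (fun _ : α => 𝕜) p) (i : α) : diagonalContraction a ha f i = a i * f i :=
  rfl

lemma norm_diagonalContraction_le (a : α → 𝕜) (ha : ∀ i, ‖a i‖ ≤ 1) :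
    ‖(diagonalContraction a ha : lp (fun _ : α => 𝕜) p →L[𝕜] _)‖ ≤ 1 := by
  unfold diagonalContraction
  exact LinearMap.mkContinuous_norm_le _ zero_le_one _

end Diagonal

lemma eq_zero_of_forall_lp_apply_eq {α E : Type*} [Infinite α] [NormedAddCommGroup E]
    {p : ℝ≥0∞} (hp : 0 < p.toReal) {f : lp (fun _ : α => E) p} {c : E} (hf : ∀ i, f i = c) :
    c = 0 := by
  have hsum := (lp.memℓp f).summable hp
  simp only [hf, summable_const_iff] at hsum
  simpa [hp.ne'] using hsum

lemma norm_one_sub_ofReal_sq_le_one {x : ℝ} (hx : x ^ 2 ≤ 1) : ‖1 - (x : ℂ) ^ 2‖ ≤ 1 := by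
  rw [← Complex.ofReal_pow, ← Complex.ofReal_one, ← Complex.ofReal_sub, Complex.norm_real,
    Real.norm_eq_abs, abs_le]
  constructor <;> nlinarith

lemma norm_inv_two_sub_ofReal_sq_le_one {x : ℝ} (hx : x ^ 2 ≤ 1) :
    ‖(2 - (x : ℂ) ^ 2)⁻¹‖ ≤ 1 := by
  rw [← Complex.ofReal_pow, ← Complex.ofReal_ofNat, ← Complex.ofReal_sub, ← Complex.ofReal_inv,
    Complex.norm_real, Real.norm_eq_abs, abs_inv, abs_of_pos (by nlinarith)]
  exact inv_le_one_of_one_le₀ (by nlinarith)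

lemma norm_one_sub_one_sub_ofReal_sq_pow_le {x : ℝ} (h0 : 0 ≤ x) (h1 : x ≤ 1) (k : ℕ) :
    ‖1 - (1 - (x : ℂ) ^ 2) ^ k‖ ≤ √k * x := by
  have hx2 : 0 ≤ 1 - x ^ 2 := by nlinarith
  have hpow_le : (1 - x ^ 2) ^ k ≤ 1 := pow_le_one₀ hx2 (by nlinarith)
  have hbernoulli : 1 + k * (-x ^ 2) ≤ (1 - x ^ 2) ^ k := by
    simpa [sub_eq_add_neg] using one_add_mul_le_pow (a := -x ^ 2) (by nlinarith) k
  have hsq : √k * x = √(k * x ^ 2) := by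
    rw [Real.sqrt_mul (Nat.cast_nonneg k), Real.sqrt_sq h0]
  rw [← Complex.ofReal_pow, ← Complex.ofReal_one, ← Complex.ofReal_sub, ← Complex.ofReal_pow,
    ← Complex.ofReal_sub, Complex.norm_real, Real.norm_eq_abs, abs_of_nonneg (by linarith), hsq,
    Real.le_sqrt (by linarith) (by positivity)]
  nlinarith [pow_nonneg hx2 k]

def geomWeight (m : ℕ) : ℝ := 2⁻¹ ^ m

@[simp] lemma geomWeight_zero : geomWeight 0 = 1 := pow_zero _

lemma geomWeight_pos (m : ℕ) : 0 < geomWeight m := by unfold geomWeight; positivity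

lemma geomWeight_le_one (m : ℕ) : geomWeight m ≤ 1 := pow_le_one₀ (by norm_num) (by norm_num)

lemma geomWeight_sq_le_one (m : ℕ) : geomWeight m ^ 2 ≤ 1 :=
  pow_le_one₀ (geomWeight_pos m).le (geomWeight_le_one m)

lemma norm_one_sub_geomWeight_sq_le_one (m : ℕ) : ‖1 - (geomWeight m : ℂ) ^ 2‖ ≤ 1 :=
  norm_one_sub_ofReal_sq_le_one (geomWeight_sq_le_one m)

def geomVec : ℓ²(ℕ, ℂ) :=
  ⟨fun m => geomWeight m, Memℓp.of_exponent_ge (q := 1)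
    ((memℓp_gen_iff (by norm_num)).2 (by simpa [geomWeight] using summable_geometric_two))
    (by norm_num)⟩

def geomSqVec : ℓ²(ℕ, ℂ) :=
  ⟨fun m => (geomWeight m : ℂ) ^ 2, (lp.memℓp geomVec).mono' fun m => by
    simpa [geomVec, abs_of_pos (geomWeight_pos m)] using
      pow_le_of_le_one (geomWeight_pos m).le (geomWeight_le_one m) two_ne_zero⟩

def headAverage : ℓ²(ℕ, ℂ) →L[ℂ] ℓ²(ℕ, ℂ) :=
  (lp.evalCLM ℂ _ 2 0).smulRight geomSqVec +
    diagonalContraction _ norm_one_sub_geomWeight_sq_le_one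

lemma headAverage_apply (z : ℓ²(ℕ, ℂ)) (m : ℕ) :
    headAverage z m = geomWeight m ^ 2 * z 0 + (1 - geomWeight m ^ 2) * z m := by
  rw [headAverage, add_apply, lp.coeFn_add, Pi.add_apply, ContinuousLinearMap.smulRight_apply,
    lp.coeFn_smul, Pi.smul_apply, diagonalContraction_apply, smul_eq_mul, mul_comm]
  rfl

lemma headAverage_apply_zero (z : ℓ²(ℕ, ℂ)) : headAverage z 0 = z 0 := by
  simp [headAverage_apply]

lemma headAverage_pow_apply (k : ℕ) (z : ℓ²(ℕ, ℂ)) (m : ℕ) :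
    (headAverage ^ k) z m =
      (1 - (1 - geomWeight m ^ 2) ^ k) * z 0 + (1 - geomWeight m ^ 2) ^ k * z m := by
  induction k generalizing z with
  | zero => simp
  | succ k ih =>
    rw [pow_succ, mul_apply_eq_comp, ih, headAverage_apply_zero, headAverage_apply]
    ring

lemma norm_headAverage_pow_le (k : ℕ) : ‖headAverage ^ k‖ ≤ 1 + √k * ‖geomVec‖ := by
  have hV (m : ℕ) : ‖1 - (1 - (geomWeight m : ℂ) ^ 2) ^ k‖ ≤ ‖(√k • geomVec) m‖ := by
    simpa [geomVec, norm_smul, abs_of_pos (geomWeight_pos m),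
      abs_of_nonneg (Real.sqrt_nonneg _)] using
      norm_one_sub_one_sub_ofReal_sq_pow_le (geomWeight_pos m).le (geomWeight_le_one m) k
  let V : ℓ²(ℕ, ℂ) := ⟨_, (lp.memℓp (√k • geomVec)).mono' hV⟩
  have hVnorm : ‖V‖ ≤ √k * ‖geomVec‖ := by
    refine (lp.norm_mono two_ne_zero hV).trans ?_
    rw [norm_smul, Real.norm_of_nonneg (Real.sqrt_nonneg _)]
  have hD (m : ℕ) : ‖(1 - (geomWeight m : ℂ) ^ 2) ^ k‖ ≤ 1 := by
    rw [norm_pow]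
    exact pow_le_one₀ (norm_nonneg _) (norm_one_sub_geomWeight_sq_le_one m)
  refine ContinuousLinearMap.opNorm_le_bound _ (by positivity) fun z => ?_
  have hdecomp : (headAverage ^ k) z = z 0 • V + diagonalContraction _ hD z := by
    ext m
    rw [headAverage_pow_apply, lp.coeFn_add, Pi.add_apply, lp.coeFn_smul, Pi.smul_apply,
      diagonalContraction_apply, smul_eq_mul, mul_comm]
  calc ‖(headAverage ^ k) z‖ = ‖z 0 • V + diagonalContraction _ hD z‖ := by rw [hdecomp]
    _ ≤ ‖z‖ * (√k * ‖geomVec‖) + 1 * ‖z‖ := by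
      refine norm_add_le_of_le ?_ ?_
      · rw [norm_smul]
        exact mul_le_mul (lp.norm_apply_le_norm two_ne_zero z 0) hVnorm (norm_nonneg _)
          (norm_nonneg _)
      · exact ContinuousLinearMap.le_of_opNorm_le _ (norm_diagonalContraction_le _ hD) z
    _ = (1 + √k * ‖geomVec‖) * ‖z‖ := by ring

lemma isLittleO_headAverage_pow :
    (fun n : ℕ => headAverage ^ n) =o[atTop] (fun n => (n : ℝ)) := by
  refine IsBigO.trans_isLittleO (IsBigO.of_bound (1 + ‖geomVec‖) ?_) isLittleO_sqrt_natCast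
  filter_upwards [eventually_ge_atTop 1] with n hn
  have hsqrt : 1 ≤ √(n : ℝ) := Real.one_le_sqrt.2 (by exact_mod_cast hn)
  rw [Real.norm_of_nonneg (Real.sqrt_nonneg _)]
  nlinarith [norm_headAverage_pow_le n, norm_nonneg geomVec]

lemma one_add_headAverage_apply (z : ℓ²(ℕ, ℂ)) (m : ℕ) :
    (1 + headAverage) z m = (2 - geomWeight m ^ 2) * z m + geomWeight m ^ 2 * z 0 := by
  rw [add_apply, lp.coeFn_add, Pi.add_apply, headAverage_apply, one_apply_eq_self]
  ring

lemma headAverage_sub_one_apply (z : ℓ²(ℕ, ℂ)) (m : ℕ) :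
    (headAverage - 1) z m = geomWeight m ^ 2 * (z 0 - z m) := by
  rw [sub_apply, lp.coeFn_sub, Pi.sub_apply, headAverage_apply, one_apply_eq_self]
  ring

lemma isUnit_one_add_headAverage : IsUnit (1 + headAverage) := by
  have hinv (m : ℕ) : ‖(2 - (geomWeight m : ℂ) ^ 2)⁻¹‖ ≤ 1 :=
    norm_inv_two_sub_ofReal_sq_le_one (geomWeight_sq_le_one m)
  have hne (m : ℕ) : 2 - (geomWeight m : ℂ) ^ 2 ≠ 0 := by
    exact_mod_cast (show (2 - geomWeight m ^ 2 : ℝ) ≠ 0 by linarith [geomWeight_sq_le_one m])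
  refine ContinuousLinearMap.isUnit_iff_bijective.2 ⟨?_, fun y => ?_⟩
  · refine (injective_iff_map_eq_zero _).2 fun z hz => ?_
    have hcoord (m : ℕ) : (2 - (geomWeight m : ℂ) ^ 2) * z m + geomWeight m ^ 2 * z 0 = 0 := by
      rw [← one_add_headAverage_apply, hz]; rfl
    have hz0 : z 0 = 0 := by
      have h := hcoord 0
      simp only [geomWeight_zero, Complex.ofReal_one, one_pow] at h
      linear_combination h / 2
    ext m
    simpa [hz0, hne] using hcoord m
  · set x := diagonalContraction _ hinv (y - (y 0 / 2) • geomSqVec)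
    have hx (m : ℕ) :
        x m = (2 - (geomWeight m : ℂ) ^ 2)⁻¹ * (y m - y 0 / 2 * geomWeight m ^ 2) :=
      rfl
    have hx0 : x 0 = y 0 / 2 := by
      rw [hx]
      norm_num
      ring
    refine ⟨x, lp.ext (funext fun m => ?_)⟩
    rw [one_add_headAverage_apply, hx m, hx0]
    field_simp [hne m]
    ring

lemma injective_headAverage_sub_one : Function.Injective ⇑(headAverage - 1) := by
  refine (injective_iff_map_eq_zero _).2 fun z hz => ?_
  have hconst (m : ℕ) : z m = z 0 := by
    have h := headAverage_sub_one_apply z m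
    rw [hz] at h
    have hw : (geomWeight m : ℂ) ^ 2 ≠ 0 := pow_ne_zero 2 (mod_cast (geomWeight_pos m).ne')
    exact (sub_eq_zero.1 ((mul_eq_zero.1 h.symm).resolve_left hw)).symm
  have hz0 := eq_zero_of_forall_lp_apply_eq (by norm_num) hconst
  ext m
  rw [hconst m, hz0]
  rfl

lemma not_denseRange_headAverage_sub_one : ¬DenseRange ⇑(headAverage - 1) := by
  intro h
  have heval := h.equalizer (lp.evalCLM ℂ _ 2 0).continuous (continuous_const (y := 0))
    (funext fun z => by
      change ((headAverage - 1) z) 0 = 0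
      rw [headAverage_sub_one_apply, sub_self, mul_zero])
  simpa [lp.evalCLM] using congrFun heval (lp.single 2 0 1)

end

/-- There exist a bounded operator `T` on `ℓ²(ℕ)` and a unimodular `λ` such that `T` is mean
ergodic and `λ` belongs to the residual spectrum of `T` (i.e. `λ I - T` is injective with
non-dense range). -/
theorem stmt_14 :
    ∃ (T : (lp (fun _ : ℕ => ℂ) 2) →L[ℂ] (lp (fun _ : ℕ => ℂ) 2)) (lam : ℂ),
      ‖lam‖ = 1 ∧
      (∀ x : lp (fun _ : ℕ => ℂ) 2, ∃ y : lp (fun _ : ℕ => ℂ) 2,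
        Tendsto (fun n : ℕ => ((n : ℂ) + 1)⁻¹ • ∑ k ∈ Finset.range (n + 1), (T ^ k) x)
          atTop (nhds y)) ∧
      Function.Injective ⇑(lam • (1 : (lp (fun _ : ℕ => ℂ) 2) →L[ℂ] (lp (fun _ : ℕ => ℂ) 2)) - T) ∧
      ¬DenseRange ⇑(lam • (1 : (lp (fun _ : ℕ => ℂ) 2) →L[ℂ] (lp (fun _ : ℕ => ℂ) 2)) - T) := by
  have hres : (-1 : ℂ) • (1 : ℓ²(ℕ, ℂ) →L[ℂ] ℓ²(ℕ, ℂ)) - -headAverage = headAverage - 1 := by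
    rw [neg_one_smul, sub_neg_eq_add, neg_add_eq_sub]
  refine ⟨-headAverage, -1, by simp, fun x => ⟨0, ?_⟩, hres ▸ injective_headAverage_sub_one,
    hres ▸ not_denseRange_headAverage_sub_one⟩
  have hpow : (fun n : ℕ => (-headAverage) ^ n) =o[atTop] (fun n => (n : ℝ)) :=
    isLittleO_norm_left.1 (by simpa only [norm_neg_pow] using isLittleO_headAverage_pow.norm_left)
  have hmean := tendsto_cesaro_zero_of_isUnit_one_sub (𝕜 := ℂ)
    (by rw [sub_neg_eq_add]; exact isUnit_one_add_headAverage) hpow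
  simpa only [Function.comp_def, ContinuousLinearMap.apply_apply, smul_apply, _root_.sum_apply,
    zero_apply] using ((ContinuousLinearMap.apply ℂ _ x).continuous.tendsto 0).comp hmean
end

section
/- Let c₀(ℕ) denote the complex Banach space of sequences converging to 0, with the supremum norm, and let T : c₀(ℕ) → c₀(ℕ) be the bounded operator defined by T(a_1, a_2, a_3, …) = (a_1, a_1, a_2, a_3, …). Then T is power bounded and 1 ∈ σ_R(T). -/
/-!
Since `‖(T a) n‖ = ‖a (n - 1)‖ ≤ ‖a‖`, `T` is a contraction, hence power bounded. A solution of
`a = T a` satisfies `a n = a (n - 1)`, so it is constant, and a constant sequence vanishing at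
infinity is zero. Finally `((1 - T) a) 0 = a 0 - a 0 = 0`, so the range of `1 - T` lies in the
closed hyperplane `{f | f 0 = 0}`, which misses the first unit vector.
-/

open Filter Topology
open scoped ZeroAtInfty

namespace ZeroAtInftyContinuousMap

section Eval

variable {α β : Type*} [TopologicalSpace α] [NormedAddCommGroup β]

lemma norm_apply_le (f : C₀(α, β)) (x : α) : ‖f x‖ ≤ ‖f‖ := by
  rw [← norm_toBCF_eq_norm]
  exact f.toBCF.norm_coe_le_norm x

instance : ContinuousEvalConst C₀(α, β) α β where
  continuous_eval_const x :=
    (continuous_eval_const (F := BoundedContinuousFunction α β) x).comp isometry_toBCF.continuous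

end Eval

variable {β : Type*} [NormedAddCommGroup β]

lemma tendsto_atTop (a : C₀(ℕ, β)) : Tendsto a atTop (𝓝 0) :=
  cocompact_eq_atTop (α := ℕ) ▸ zero_at_infty a

lemma eq_zero_of_forall_apply_eq_apply_pred (a : C₀(ℕ, β)) (h : ∀ n, a n = a (n - 1)) :
    a = 0 := by
  have hconst : ∀ n, a n = a 0 := by
    intro n
    induction n with
    | zero => rfl
    | succ k ih => rw [h (k + 1), Nat.add_sub_cancel, ih]
  have h0 : a 0 = 0 :=
    tendsto_const_nhds_iff.mp (a.tendsto_atTop.congr fun n => hconst n)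
  ext n
  rw [hconst n, h0, zero_apply]

noncomputable def single (i : ℕ) (b : β) : C₀(ℕ, β) where
  toFun := Pi.single i b
  continuous_toFun := continuous_of_discreteTopology
  zero_at_infty' := by
    rw [cocompact_eq_atTop]
    refine tendsto_const_nhds.congr' ?_
    filter_upwards [eventually_gt_atTop i] with n hn
    exact (Pi.single_eq_of_ne (M := fun _ => β) hn.ne' b).symm

@[simp]
lemma single_apply_self (i : ℕ) (b : β) : single i b i = b :=
  Pi.single_eq_same (M := fun _ => β) i b

end ZeroAtInftyContinuousMap

lemma ContinuousLinearMap.norm_pow_le_one {𝕜 E : Type*} [NontriviallyNormedField 𝕜]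
    [SeminormedAddCommGroup E] [NormedSpace 𝕜 E] {T : E →L[𝕜] E} (hT : ‖T‖ ≤ 1) (n : ℕ) :
    ‖T ^ n‖ ≤ 1 := by
  rcases Nat.eq_zero_or_pos n with rfl | hn
  · exact norm_id_le
  · exact (norm_pow_le' T hn).trans (pow_le_one₀ (norm_nonneg T) hT)

section RightShiftWithRepeat

open ZeroAtInftyContinuousMap

variable {𝕜 E : Type*} [NontriviallyNormedField 𝕜] [NormedAddCommGroup E] [NormedSpace 𝕜 E]
  {T : C₀(ℕ, E) →L[𝕜] C₀(ℕ, E)}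

lemma norm_le_one_of_apply_eq_apply_pred (hT : ∀ a n, T a n = a (n - 1)) : ‖T‖ ≤ 1 := by
  refine T.opNorm_le_bound zero_le_one fun a => ?_
  rw [one_mul, ← norm_toBCF_eq_norm]
  refine BoundedContinuousFunction.norm_le_of_nonempty.2 fun n => ?_
  change ‖T a n‖ ≤ ‖a‖
  rw [hT]
  exact norm_apply_le a (n - 1)

lemma one_sub_apply_apply (a : C₀(ℕ, E)) (n : ℕ) :
    ((1 - T : C₀(ℕ, E) →L[𝕜] C₀(ℕ, E)) a) n = a n - T a n :=
  rfl

lemma injective_one_sub_of_apply_eq_apply_pred (hT : ∀ a n, T a n = a (n - 1)) :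
    Function.Injective (1 - T : C₀(ℕ, E) →L[𝕜] C₀(ℕ, E)) := by
  refine (injective_iff_map_eq_zero (1 - T)).2 fun a ha => ?_
  refine eq_zero_of_forall_apply_eq_apply_pred a fun n => ?_
  rw [← hT, ← sub_eq_zero, ← one_sub_apply_apply, ha, ZeroAtInftyContinuousMap.zero_apply]

lemma not_denseRange_one_sub_of_apply_eq_apply_pred [Nontrivial E]
    (hT : ∀ a n, T a n = a (n - 1)) : ¬DenseRange (1 - T : C₀(ℕ, E) →L[𝕜] C₀(ℕ, E)) := by
  intro hdense
  have hrange : Set.range (1 - T : C₀(ℕ, E) →L[𝕜] C₀(ℕ, E)) ⊆ {f : C₀(ℕ, E) | f 0 = 0} := by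
    rintro _ ⟨a, rfl⟩
    simp only [Set.mem_ofPred_eq, one_sub_apply_apply, hT, Nat.zero_sub, sub_self]
  obtain ⟨b, hb⟩ := exists_ne (0 : E)
  have hclosed : IsClosed {f : C₀(ℕ, E) | f 0 = 0} :=
    isClosed_eq (continuous_eval_const 0) continuous_const
  have hmem := hclosed.closure_subset_iff.2 hrange (hdense (single 0 b))
  exact hb (by simpa using hmem)

end RightShiftWithRepeat

/-- The operator `T (a₁, a₂, a₃, …) = (a₁, a₁, a₂, a₃, …)` on `c₀(ℕ)` (here written with
`0`-based indexing: `(T a) n = a (n - 1)` with `(T a) 0 = a 0`) is power bounded and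
`1` lies in its residual spectrum. -/
theorem stmt_15 (T : C₀(ℕ, ℂ) →L[ℂ] C₀(ℕ, ℂ))
    (hT : ∀ (a : C₀(ℕ, ℂ)) (n : ℕ), (T a) n = a (n - 1)) :
    (∃ C : ℝ, ∀ n : ℕ, ‖T ^ n‖ ≤ C) ∧
    Function.Injective ⇑((1 : C₀(ℕ, ℂ) →L[ℂ] C₀(ℕ, ℂ)) - T) ∧
    ¬DenseRange ⇑((1 : C₀(ℕ, ℂ) →L[ℂ] C₀(ℕ, ℂ)) - T) :=
  ⟨⟨1, ContinuousLinearMap.norm_pow_le_one (norm_le_one_of_apply_eq_apply_pred hT)⟩,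
    injective_one_sub_of_apply_eq_apply_pred hT,
    not_denseRange_one_sub_of_apply_eq_apply_pred hT⟩
end
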